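/- arXiv:1612.04935 — 9 statements merged into one kernel-verified Lean document; each statement's English description precedes it below -/
import Mathlib

section
/- The operation α ⋄ β = {(x,y) : xα = βy ≠ ∅} on binary relations, where xα = {z : (x,z) ∈ α} and βy = {z : (z,y) ∈ β}, is associative when restricted to the set of difunctional relations on {1,...,n} (a relation α is difunctional if α = α ∘ α⁻¹ ∘ α). -/
namespace DRel

abbrev Rl (n : ℕ) := Fin n → Fin n → Prop

/-- Ordinary relational composition. -/
def rcomp {n : ℕ} (α β : Rl n) : Rl n := fun x y => ∃ z, α x z ∧ β z y

/-- Converse relation. -/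
def rinv {n : ℕ} (α : Rl n) : Rl n := fun x y => α y x

/-- α is difunctional iff α = α ∘ α⁻¹ ∘ α. -/
def IsDifunctional {n : ℕ} (α : Rl n) : Prop := rcomp α (rcomp (rinv α) α) = α

/-- The operation α ⋄ β = {(x,y) : xα = βy ≠ ∅}. -/
def dia {n : ℕ} (α β : Rl n) : Rl n :=
  fun x y => ({z | α x z} = {z | β z y} ∧ ∃ z, α x z)

def dom {n : ℕ} (α : Rl n) : Set (Fin n) := {x | ∃ y, α x y}

def codom {n : ℕ} (α : Rl n) : Set (Fin n) := {y | ∃ x, α x y}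

/-- The kernel of α: the set of blocks {x' : x'α = xα} for x in the domain. -/
def ker {n : ℕ} (α : Rl n) : Set (Set (Fin n)) :=
  {A | ∃ x, x ∈ dom α ∧ A = {x' | {z | α x' z} = {z | α x z}}}

def coker {n : ℕ} (α : Rl n) : Set (Set (Fin n)) := ker (rinv α)

/-- The rank of a difunctional relation: the number of blocks. -/
noncomputable def rnk {n : ℕ} (α : Rl n) : ℕ := (ker α).ncard

/-- Subset generated by A under a binary operation. -/
def Gen {T : Type*} (mul : T → T → T) (A : Set T) : Set T :=
  ⋂₀ {C : Set T | A ⊆ C ∧ ∀ a ∈ C, ∀ b ∈ C, mul a b ∈ C}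

/-- Stirling numbers of the second kind. -/
def stirling : ℕ → ℕ → ℕ
  | 0, 0 => 1
  | 0, _ + 1 => 0
  | _ + 1, 0 => 0
  | n + 1, k + 1 => (k + 1) * stirling n (k + 1) + stirling n k

/-- Green's R-preorder on (D_n, ⋄): α ∈ β S¹. -/
def leR {n : ℕ} (α β : Rl n) : Prop := α = β ∨ ∃ γ, IsDifunctional γ ∧ α = dia β γ

/-- Green's L-preorder on (D_n, ⋄): α ∈ S¹ β. -/
def leL {n : ℕ} (α β : Rl n) : Prop := α = β ∨ ∃ γ, IsDifunctional γ ∧ α = dia γ β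

/-- Green's J-preorder on (D_n, ⋄): α ∈ S¹ β S¹. -/
def leJ {n : ℕ} (α β : Rl n) : Prop :=
  α = β ∨ (∃ γ, IsDifunctional γ ∧ (α = dia β γ ∨ α = dia γ β)) ∨
    ∃ γ δ, IsDifunctional γ ∧ IsDifunctional δ ∧ α = dia (dia γ β) δ

/-- Membership in I_n: all blocks singletons, i.e. a partial injection graph. -/
def InI {n : ℕ} (γ : Rl n) : Prop :=
  (∀ x y y', γ x y → γ x y' → y = y') ∧ (∀ x x' y, γ x y → γ x' y → x = x')

/-- β = λ_𝐀 for the partition 𝐀 = (A 0, …, A (k-1)) of {1,…,n}, blocks ordered by minima. -/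
def IsLambda {n k : ℕ} (A : Fin k → Set (Fin n)) (β : Rl n) : Prop :=
  (∀ i, (A i).Nonempty) ∧ (∀ i j, i ≠ j → Disjoint (A i) (A j)) ∧ (⋃ i, A i) = Set.univ ∧
  (∀ i j : Fin k, i < j → ∃ m ∈ A i, ∀ x ∈ A j, m < x) ∧
  (∀ x y, β x y ↔ ∃ i : Fin k, x ∈ A i ∧ (y : ℕ) = (i : ℕ))

/-- β = ρ_𝐀 for the partition 𝐀 = (A 0, …, A (k-1)) of {1,…,n}, blocks ordered by minima. -/
def IsRho {n k : ℕ} (A : Fin k → Set (Fin n)) (β : Rl n) : Prop :=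
  (∀ i, (A i).Nonempty) ∧ (∀ i j, i ≠ j → Disjoint (A i) (A j)) ∧ (⋃ i, A i) = Set.univ ∧
  (∀ i j : Fin k, i < j → ∃ m ∈ A i, ∀ x ∈ A j, m < x) ∧
  (∀ x y, β x y ↔ ∃ i : Fin k, (x : ℕ) = (i : ℕ) ∧ y ∈ A i)

/-- The operation ⋄ is associative on the set of difunctional relations on {1,…,n}. -/
theorem stmt0 (n : ℕ) (hn : 0 < n) (α β γ : Rl n)
    (hα : IsDifunctional α) (hβ : IsDifunctional β) (hγ : IsDifunctional γ) :
    dia (dia α β) γ = dia α (dia β γ) := by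
  have col : ∀ u v w w0 : Fin n, β u w → β u w0 → β v w → β v w0 := by
    intro u v w w0 h1 h2 h3
    have h : rcomp β (rcomp (rinv β) β) v w0 := ⟨w, h3, u, h1, h2⟩
    rwa [hβ] at h
  have row : ∀ z z0 w w' : Fin n, β z w → β z0 w → β z w' → β z0 w' := by
    intro z z0 w w' h1 h2 h3
    have h : rcomp β (rcomp (rinv β) β) z0 w' := ⟨w, h2, z, h1, h3⟩
    rwa [hβ] at h
  funext x y
  apply propext
  constructor
  · rintro ⟨hS, w0, hw0⟩
    have hγw0 : γ w0 y := by
      have := Set.ext_iff.1 hS w0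
      exact this.1 hw0
    obtain ⟨hxa, z0, hz0⟩ := hw0
    refine ⟨?_, z0, hz0⟩
    ext u
    simp only [Set.mem_setOf_eq]
    constructor
    · intro hu
      have hbu : β u w0 := (Set.ext_iff.1 hxa u).1 hu
      refine ⟨?_, w0, hbu⟩
      ext w
      simp only [Set.mem_setOf_eq]
      constructor
      · intro hbw
        have hdab : dia α β x w := by
          refine ⟨?_, z0, hz0⟩
          rw [hxa]
          ext v
          simp only [Set.mem_setOf_eq]
          exact ⟨fun h => col u v w0 w hbu hbw h, fun h => col u v w w0 hbw hbu h⟩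
        exact (Set.ext_iff.1 hS w).1 hdab
      · intro hγw
        have hdab : dia α β x w := (Set.ext_iff.1 hS w).2 hγw
        obtain ⟨hxa', _⟩ := hdab
        exact (Set.ext_iff.1 hxa' u).1 hu
    · rintro ⟨hzb, w1, hw1⟩
      have hbw0 : β u w0 := (Set.ext_iff.1 hzb w0).2 hγw0
      exact (Set.ext_iff.1 hxa u).2 hbw0
  · rintro ⟨hT, z0, hz0⟩
    have hd0 : dia β γ z0 y := (Set.ext_iff.1 hT z0).1 hz0
    obtain ⟨hzb, w0, hw0⟩ := hd0
    have hγw0 : γ w0 y := (Set.ext_iff.1 hzb w0).1 hw0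
    have hset : {w | dia α β x w} = {w | γ w y} := by
      ext w
      simp only [Set.mem_setOf_eq]
      constructor
      · rintro ⟨hxa', z1, hz1⟩
        have : β z0 w := (Set.ext_iff.1 hxa' z0).1 hz0
        exact (Set.ext_iff.1 hzb w).1 this
      · intro hγw
        have hbz0w : β z0 w := (Set.ext_iff.1 hzb w).2 hγw
        refine ⟨?_, z0, hz0⟩
        ext z
        simp only [Set.mem_setOf_eq]
        constructor
        · intro hz
          have hd : dia β γ z y := (Set.ext_iff.1 hT z).1 hz
          obtain ⟨hzb', _⟩ := hd
          exact (Set.ext_iff.1 hzb' w).2 hγw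
        · intro hbzw
          have hd : dia β γ z y := by
            refine ⟨?_, w, hbzw⟩
            rw [← hzb]
            ext w'
            simp only [Set.mem_setOf_eq]
            exact ⟨fun h => row z z0 w w' hbzw hbz0w h,
                   fun h => row z0 z w w' hbz0w hbzw h⟩
          exact (Set.ext_iff.1 hT z).2 hd
    refine ⟨hset, w0, (Set.ext_iff.1 hset w0).2 hγw0⟩

end DRel
end

section
/- The semigroup (D_n, ⋄) of difunctional relations on {1,...,n} under the operation α ⋄ β = {(x,y) : xα = βy ≠ ∅} is an inverse semigroup. -/
namespace DRel

lemma diff_mp {n : ℕ} {α : Rl n} (h : IsDifunctional α) {x z w y : Fin n}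
    (h1 : α x z) (h2 : α w z) (h3 : α w y) : α x y := by
  have e := congrFun (congrFun h x) y
  rw [← e]
  exact ⟨z, h1, w, h2, h3⟩

lemma dia_difunctional {n : ℕ} (α β : Rl n) : IsDifunctional (dia α β) := by
  funext x y
  apply propext
  constructor
  · rintro ⟨z, ⟨h1, hne⟩, w, ⟨h2, -⟩, ⟨h3, -⟩⟩
    exact ⟨h1.trans (h2.symm.trans h3), hne⟩
  · intro h
    exact ⟨y, h, x, h, h⟩

lemma col_pivot {n : ℕ} {β : Rl n} (hβ : IsDifunctional β) {w z0 : Fin n} (h0 : β w z0)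
    {z : Fin n} : ({u | β u z} = {u | β u z0}) ↔ β w z := by
  constructor
  · intro h
    have hw : w ∈ {u | β u z0} := h0
    rw [← h] at hw
    exact hw
  · intro hz
    ext u
    exact ⟨fun hu => diff_mp hβ hu hz h0, fun hu => diff_mp hβ hu h0 hz⟩

lemma row_pivot {n : ℕ} {β : Rl n} (hβ : IsDifunctional β) {z0 w : Fin n} (h0 : β z0 w)
    {z : Fin n} : ({u | β z u} = {u | β z0 u}) ↔ β z w := by
  constructor
  · intro h
    have hw : w ∈ {u | β z0 u} := h0
    rw [← h] at hw
    exact hw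
  · intro hz
    ext u
    exact ⟨fun hu => diff_mp hβ h0 hz hu, fun hu => diff_mp hβ hz h0 hu⟩

lemma dia_assoc {n : ℕ} (α β γ : Rl n) (hβ : IsDifunctional β) :
    dia (dia α β) γ = dia α (dia β γ) := by
  funext x y
  apply propext
  constructor
  · rintro ⟨hset, z0, ⟨hz0, u0, hu0⟩⟩
    have hγ : ∀ z, γ z y ↔ dia α β x z := fun z => (Set.ext_iff.mp hset z).symm
    refine ⟨?_, u0, hu0⟩
    ext z
    show α x z ↔ dia β γ z y
    constructor
    · intro hxz
      have hbz : β z z0 := (Set.ext_iff.mp hz0 z).mp hxz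
      refine ⟨?_, z0, hbz⟩
      ext u
      show β z u ↔ γ u y
      constructor
      · intro hbu
        exact (hγ u).mpr ⟨hz0.trans ((col_pivot hβ hbz).mpr hbu).symm, u0, hu0⟩
      · intro hγu
        obtain ⟨heq, -⟩ := (hγ u).mp hγu
        exact (col_pivot hβ hbz).mp (heq.symm.trans hz0)
    · rintro ⟨hrow, u1, hbu1⟩
      have hb0 : β u0 z0 := (Set.ext_iff.mp hz0 u0).mp hu0
      have hγu1 : γ u1 y := (Set.ext_iff.mp hrow u1).mp hbu1
      obtain ⟨heq1, -⟩ := (hγ u1).mp hγu1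
      have hcc : {u | β u u1} = {u | β u z0} := heq1.symm.trans hz0
      have hbu0u1 : β u0 u1 := (col_pivot hβ hb0).mp hcc
      have hbzz0 : β z z0 := diff_mp hβ hbu1 hbu0u1 hb0
      exact (Set.ext_iff.mp hz0 z).mpr hbzz0
  · rintro ⟨hset, z1, hz1⟩
    have hd : ∀ z, α x z ↔ dia β γ z y := fun z => Set.ext_iff.mp hset z
    obtain ⟨hrow1, u1, hbu1⟩ := (hd z1).mp hz1
    have hclaim : ∀ z, α x z ↔ β z u1 := by
      intro z
      rw [hd z]
      constructor
      · rintro ⟨hr, -⟩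
        exact (row_pivot hβ hbu1).mp (hr.trans hrow1.symm)
      · intro hb
        exact ⟨((row_pivot hβ hbu1).mpr hb).trans hrow1, u1, hb⟩
    have hrowx : {u | α x u} = {u | β u u1} := Set.ext fun u => hclaim u
    refine ⟨?_, u1, hrowx, z1, hz1⟩
    ext z
    show dia α β x z ↔ γ z y
    constructor
    · rintro ⟨heq, -⟩
      have hb : β z1 z := (Set.ext_iff.mp heq z1).mp hz1
      exact (Set.ext_iff.mp hrow1 z).mp hb
    · intro hγz
      have hb : β z1 z := (Set.ext_iff.mp hrow1 z).mpr hγz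
      exact ⟨hrowx.trans ((col_pivot hβ hbu1).mpr hb).symm, z1, hz1⟩

lemma rinv_difunctional {n : ℕ} {α : Rl n} (hα : IsDifunctional α) :
    IsDifunctional (rinv α) := by
  funext x y
  apply propext
  constructor
  · rintro ⟨z, h1, w, h2, h3⟩
    exact diff_mp hα h3 h2 h1
  · intro h
    exact ⟨y, h, x, h, h⟩

lemma inv_eq {n : ℕ} (α : Rl n) (hα : IsDifunctional α) :
    dia (dia α (rinv α)) α = α := by
  funext x y
  apply propext
  constructor
  · rintro ⟨hset, z, hz⟩
    exact (Set.ext_iff.mp hset x).mp ⟨rfl, hz.2⟩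
  · intro hxy
    refine ⟨?_, x, rfl, y, hxy⟩
    ext z
    show dia α (rinv α) x z ↔ α z y
    constructor
    · rintro ⟨heq, -⟩
      exact (Set.ext_iff.mp heq y).mp hxy
    · intro hzy
      refine ⟨?_, y, hxy⟩
      ext u
      exact ⟨fun hu => diff_mp hα hzy hxy hu, fun hu => diff_mp hα hxy hzy hu⟩

/-- (D_n, ⋄) is an inverse semigroup: it is closed under ⋄, ⋄ is associative on it,
and every element has a unique inverse. -/
theorem stmt2 (n : ℕ) (hn : 0 < n) :
    (∀ α β : Rl n, IsDifunctional α → IsDifunctional β → IsDifunctional (dia α β)) ∧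
    (∀ α β γ : Rl n, IsDifunctional α → IsDifunctional β → IsDifunctional γ →
      dia (dia α β) γ = dia α (dia β γ)) ∧
    (∀ α : Rl n, IsDifunctional α →
      ∃! β : Rl n, IsDifunctional β ∧ dia (dia α β) α = α ∧ dia (dia β α) β = β) := by
  refine ⟨fun α β _ _ => dia_difunctional α β,
    fun α β γ _ hβ _ => dia_assoc α β γ hβ, ?_⟩
  intro α hα
  refine ⟨rinv α, ⟨rinv_difunctional hα, inv_eq α hα,
    inv_eq (rinv α) (rinv_difunctional hα)⟩, ?_⟩
  rintro β' ⟨hd, e1, e2⟩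
  funext x y
  apply propext
  constructor
  · intro hb
    have h2 : dia (dia β' α) β' x y := by rw [e2]; exact hb
    obtain ⟨hset, -⟩ := h2
    obtain ⟨key, -⟩ : dia β' α x x := (Set.ext_iff.mp hset x).mpr hb
    exact (Set.ext_iff.mp key y).mp hb
  · intro ha
    have h1 : dia (dia α β') α y x := by rw [e1]; exact ha
    obtain ⟨hset, -⟩ := h1
    obtain ⟨key, -⟩ : dia α β' y y := (Set.ext_iff.mp hset y).mpr ha
    exact (Set.ext_iff.mp key x).mp ha

end DRel
end

section
/- For α, β ∈ D_n: α ≤_R β if and only if ker(α) ⊆ ker(β), where ≤_R is Green's R-preorder on the semigroup (D_n, ⋄). -/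
namespace DRel

lemma difun_step {n : ℕ} {α : Rl n} (h : IsDifunctional α) {x x' z y : Fin n}
    (h1 : α x z) (h2 : α x' z) (h3 : α x' y) : α x y := by
  have hh : rcomp α (rcomp (rinv α) α) x y := ⟨z, h1, x', h2, h3⟩
  rwa [h] at hh

lemma img_eq {n : ℕ} {α : Rl n} (h : IsDifunctional α) {x x' z : Fin n}
    (h1 : α x z) (h2 : α x' z) : {y | α x y} = {y | α x' y} := by
  ext y
  exact ⟨fun hy => difun_step h h2 h1 hy, fun hy => difun_step h h1 h2 hy⟩

lemma key {n : ℕ} {α β : Rl n} (hk : ker α ⊆ ker β) {x : Fin n} (hx : x ∈ dom α) :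
    x ∈ dom β ∧ ∀ u, ({z | β u z} = {z | β x z} ↔ {z | α u z} = {z | α x z}) := by
  have hA : {u | {z | α u z} = {z | α x z}} ∈ ker α := ⟨x, hx, rfl⟩
  obtain ⟨x₀, hx₀dom, hEq⟩ := hk hA
  have hx0 : {z | β x z} = {z | β x₀ z} := by
    have h1 : x ∈ {u | {z | α u z} = {z | α x z}} := rfl
    rw [hEq] at h1
    exact h1
  constructor
  · obtain ⟨y0, hy0⟩ := hx₀dom
    exact ⟨y0, (Set.ext_iff.mp hx0 y0).mpr hy0⟩
  · intro u
    have hmem : ({z | α u z} = {z | α x z}) ↔ ({z | β u z} = {z | β x₀ z}) :=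
      Set.ext_iff.mp hEq u
    rw [hx0]
    exact hmem.symm

/-- For α, β ∈ D_n: α ≤_R β iff ker(α) ⊆ ker(β). -/
theorem stmt4 (n : ℕ) (hn : 0 < n) (α β : Rl n)
    (hα : IsDifunctional α) (hβ : IsDifunctional β) :
    leR α β ↔ ker α ⊆ ker β := by
  constructor
  · rintro (rfl | ⟨γ, -, rfl⟩)
    · exact le_refl _
    · rintro A ⟨x, ⟨y, hxy⟩, rfl⟩
      refine ⟨x, hxy.2, ?_⟩
      ext u
      simp only [Set.mem_setOf_eq]
      constructor
      · intro h
        have huy : dia β γ u y := (Set.ext_iff.mp h y).mpr hxy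
        rw [huy.1, hxy.1]
      · intro h
        have hpt : ∀ z, β u z ↔ β x z := Set.ext_iff.mp h
        ext y'
        simp only [Set.mem_setOf_eq]
        constructor
        · rintro ⟨h1, z, h2⟩
          exact ⟨by rw [← h]; exact h1, z, (hpt z).mp h2⟩
        · rintro ⟨h1, z, h2⟩
          exact ⟨by rw [h]; exact h1, z, (hpt z).mpr h2⟩
  · intro hk
    right
    refine ⟨fun z y => ∃ x, β x z ∧ α x y, ?_, ?_⟩
    · apply funext; intro z; apply funext; intro y; apply propext
      constructor
      · rintro ⟨w, ⟨x1, hb1, ha1⟩, v, ⟨x2, hb2, ha2⟩, x3, hb3, ha3⟩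
        refine ⟨x1, hb1, ?_⟩
        have e12 : {w | α x1 w} = {w | α x2 w} := img_eq hα ha1 ha2
        have eβ23 : {z | β x2 z} = {z | β x3 z} := img_eq hβ hb2 hb3
        have e23 : {w | α x2 w} = {w | α x3 w} := ((key hk ⟨y, ha3⟩).2 x2).mp eβ23
        have hy : y ∈ {w | α x1 w} := by rw [e12, e23]; exact ha3
        exact hy
      · intro hzy
        exact ⟨y, hzy, z, hzy, hzy⟩
    · apply funext; intro x; apply funext; intro y; apply propext
      show α x y ↔ ({z | β x z} = {z | ∃ x', β x' z ∧ α x' y} ∧ ∃ z, β x z)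
      constructor
      · intro hxy
        obtain ⟨hxβ, hblk⟩ := key hk ⟨y, hxy⟩
        refine ⟨?_, hxβ⟩
        ext z
        simp only [Set.mem_setOf_eq]
        constructor
        · intro hz; exact ⟨x, hz, hxy⟩
        · rintro ⟨x', hz, hx'y⟩
          have e : {z | β x' z} = {z | β x z} := (hblk x').mpr (img_eq hα hx'y hxy)
          exact (Set.ext_iff.mp e z).mp hz
      · rintro ⟨himg, z, hz⟩
        have hγ : ∃ x', β x' z ∧ α x' y := (Set.ext_iff.mp himg z).mp hz
        obtain ⟨x', hbz, hx'y⟩ := hγ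
        have e : {z | β x z} = {z | β x' z} := img_eq hβ hz hbz
        have eα : {z | α x z} = {z | α x' z} := ((key hk ⟨y, hx'y⟩).2 x).mp e
        exact (Set.ext_iff.mp eα y).mpr hx'y

end DRel
end

section
/- For α, β ∈ D_n: α J β (Green's J-relation on (D_n, ⋄)) if and only if rank(α) = rank(β). Consequently the J-classes of D_n are the sets J_r = {α ∈ D_n : rank(α) = r} for 0 ≤ r ≤ n, and they form a chain J₀ < J₁ < ⋯ < J_n. -/
namespace DRel

section Aux

variable {n : ℕ}

/-- The image of `x` under the relation `α`. -/
def img (α : Rl n) (x : Fin n) : Set (Fin n) := {z | α x z}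

/-- The set of nonempty images of `α`. -/
def Im (α : Rl n) : Set (Set (Fin n)) := {B | ∃ x, B = img α x ∧ B.Nonempty}

lemma img_eq_of_df {α : Rl n} (hα : IsDifunctional α) {x x' y : Fin n}
    (h1 : α x y) (h2 : α x' y) : img α x = img α x' := by
  ext w
  constructor
  · intro hw
    have hc : rcomp α (rcomp (rinv α) α) x' w := ⟨y, h2, x, h1, hw⟩
    rwa [hα] at hc
  · intro hw
    have hc : rcomp α (rcomp (rinv α) α) x w := ⟨y, h1, x', h2, hw⟩
    rwa [hα] at hc

lemma Im_eq_of_mem {α : Rl n} (hα : IsDifunctional α) {B B' : Set (Fin n)} {w : Fin n}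
    (hB : B ∈ Im α) (hB' : B' ∈ Im α) (h : w ∈ B) (h' : w ∈ B') : B = B' := by
  obtain ⟨x, rfl, -⟩ := hB
  obtain ⟨x', rfl, -⟩ := hB'
  exact img_eq_of_df hα h h'

lemma rinv_df {α : Rl n} (hα : IsDifunctional α) : IsDifunctional (rinv α) := by
  show rcomp (rinv α) (rcomp (rinv (rinv α)) (rinv α)) = rinv α
  funext x y
  apply propext
  constructor
  · rintro ⟨z, h1, u, h2, h3⟩
    have hc : rcomp α (rcomp (rinv α) α) y x := ⟨u, h3, z, h2, h1⟩
    rwa [hα] at hc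
  · intro h1
    exact ⟨y, h1, x, h1, h1⟩

lemma ker_eq_image (α : Rl n) :
    ker α = (fun B => {x' | img α x' = B}) '' Im α := by
  ext A
  constructor
  · rintro ⟨x, ⟨y, hy⟩, rfl⟩
    exact ⟨img α x, ⟨x, rfl, ⟨y, hy⟩⟩, rfl⟩
  · rintro ⟨B, ⟨x, rfl, hne⟩, rfl⟩
    exact ⟨x, hne, rfl⟩

lemma injOn_blocks (α : Rl n) : Set.InjOn (fun B => {x' | img α x' = B}) (Im α) := by
  rintro B ⟨x, rfl, -⟩ B' ⟨x', rfl, -⟩ h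
  have h' : {x'' | img α x'' = img α x} = {x'' | img α x'' = img α x'} := h
  have hx : x ∈ {x'' | img α x'' = img α x} := rfl
  rw [h'] at hx
  exact hx

lemma rnk_eq_ncard_Im (α : Rl n) : rnk α = (Im α).ncard := by
  rw [rnk, ker_eq_image, Set.ncard_image_of_injOn (injOn_blocks α)]

lemma hImg_claim {β : Rl n} (hβ : IsDifunctional β) {x y : Fin n} (hy : β x y) :
    {z | ∃ y' ∈ img β x, β z y'} = img (rinv β) y := by
  ext z
  constructor
  · rintro ⟨y', hy', hz⟩
    have hc : rcomp β (rcomp (rinv β) β) z y := ⟨y', hz, x, hy', hy⟩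
    rwa [hβ] at hc
  · intro hz
    exact ⟨y, hy, hz⟩

lemma ncard_Im_rinv {β : Rl n} (hβ : IsDifunctional β) :
    (Im β).ncard = (Im (rinv β)).ncard := by
  have key : Im (rinv β) = (fun B => {z | ∃ y ∈ B, β z y}) '' Im β := by
    ext A
    constructor
    · rintro ⟨y, rfl, ⟨x, hx⟩⟩
      exact ⟨img β x, ⟨x, rfl, ⟨y, hx⟩⟩, hImg_claim hβ hx⟩
    · rintro ⟨B, ⟨x, rfl, ⟨y, hy⟩⟩, rfl⟩
      exact ⟨y, hImg_claim hβ hy, ⟨x, ⟨y, hy, hy⟩⟩⟩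
  have inj : Set.InjOn (fun B => {z | ∃ y ∈ B, β z y}) (Im β) := by
    rintro B ⟨x, rfl, ⟨y, hy⟩⟩ B' ⟨x', rfl, ⟨y', hy'⟩⟩ h
    have h' : {z | ∃ u ∈ img β x, β z u} = {z | ∃ u ∈ img β x', β z u} := h
    have hx : x ∈ {z | ∃ u ∈ img β x, β z u} := ⟨y, hy, hy⟩
    rw [h'] at hx
    obtain ⟨u, hu, hxu⟩ := hx
    exact img_eq_of_df hβ hxu hu
  rw [key, Set.ncard_image_of_injOn inj]

lemma dia_df (α β : Rl n) : IsDifunctional (dia α β) := by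
  show rcomp (dia α β) (rcomp (rinv (dia α β)) (dia α β)) = dia α β
  funext x y
  apply propext
  constructor
  · rintro ⟨y', ⟨h1, h1'⟩, x', ⟨h2, -⟩, h3, -⟩
    exact ⟨h1.trans (h2.symm.trans h3), h1'⟩
  · intro h
    exact ⟨y, h, x, h, h⟩

lemma rinv_dia (α β : Rl n) : rinv (dia α β) = dia (rinv β) (rinv α) := by
  funext y x
  apply propext
  constructor
  · rintro ⟨h, z, hz⟩
    exact ⟨h.symm, z, (Set.ext_iff.mp h z).mp hz⟩
  · rintro ⟨h, z, hz⟩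
    exact ⟨h.symm, z, (Set.ext_iff.mp h z).mp hz⟩

lemma imgdia_eq_of_img {α β : Rl n} {x x' : Fin n} (h : img α x = img α x') :
    img (dia α β) x = img (dia α β) x' := by
  ext y
  constructor
  · rintro ⟨h1, z, hz⟩
    exact ⟨h.symm.trans h1, z, (Set.ext_iff.mp h z).mp hz⟩
  · rintro ⟨h1, z, hz⟩
    exact ⟨h.trans h1, z, (Set.ext_iff.mp h z).mpr hz⟩

lemma img_eq_of_imgdia {α β : Rl n} {x x' : Fin n}
    (h : img (dia α β) x = img (dia α β) x') (hne : (img (dia α β) x).Nonempty) :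
    img α x = img α x' := by
  obtain ⟨y, hy⟩ := hne
  have hy' : dia α β x' y := (Set.ext_iff.mp h y).mp hy
  exact hy.1.trans hy'.1.symm

lemma f_img_eq {α β : Rl n} {x : Fin n} (hne : (img (dia α β) x).Nonempty) :
    {z | ∃ x', img (dia α β) x = img (dia α β) x' ∧ α x' z} = img α x := by
  ext z
  constructor
  · rintro ⟨x', he, hz⟩
    exact (Set.ext_iff.mp (img_eq_of_imgdia he hne) z).mpr hz
  · intro hz
    exact ⟨x, rfl, hz⟩

lemma rnk_dia_le_left (α β : Rl n) : rnk (dia α β) ≤ (Im α).ncard := by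
  rw [rnk_eq_ncard_Im]
  refine Set.ncard_le_ncard_of_injOn
    (fun C => {z | ∃ x', C = img (dia α β) x' ∧ α x' z}) ?_ ?_ (Im α).toFinite
  · rintro C ⟨x, rfl, hne⟩
    refine ⟨x, f_img_eq hne, ?_⟩
    obtain ⟨y, hy⟩ := hne
    obtain ⟨z, hz⟩ := hy.2
    exact ⟨z, x, rfl, hz⟩
  · rintro C ⟨x, rfl, hne⟩ C' ⟨x', rfl, hne'⟩ h
    have h' : {z | ∃ x'', img (dia α β) x = img (dia α β) x'' ∧ α x'' z}
        = {z | ∃ x'', img (dia α β) x' = img (dia α β) x'' ∧ α x'' z} := h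
    have h2 : img α x = img α x' :=
      (f_img_eq hne).symm.trans (h'.trans (f_img_eq hne'))
    exact imgdia_eq_of_img h2

lemma rnk_dia_le_left' (α β : Rl n) : rnk (dia α β) ≤ rnk α :=
  (rnk_dia_le_left α β).trans_eq (rnk_eq_ncard_Im α).symm

lemma rnk_dia_le_right (α : Rl n) {β : Rl n} (hβ : IsDifunctional β) :
    rnk (dia α β) ≤ rnk β := by
  have h1 : rnk (dia α β) = (Im (rinv (dia α β))).ncard := by
    rw [rnk_eq_ncard_Im]; exact ncard_Im_rinv (dia_df α β)
  rw [h1, rinv_dia]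
  calc (Im (dia (rinv β) (rinv α))).ncard
      = rnk (dia (rinv β) (rinv α)) := (rnk_eq_ncard_Im _).symm
    _ ≤ (Im (rinv β)).ncard := rnk_dia_le_left _ _
    _ = (Im β).ncard := (ncard_Im_rinv hβ).symm
    _ = rnk β := (rnk_eq_ncard_Im β).symm

lemma rnk_le_of_leJ {α β : Rl n} (hβ : IsDifunctional β) (h : leJ α β) :
    rnk α ≤ rnk β := by
  rcases h with rfl | ⟨γ, hγ, rfl | rfl⟩ | ⟨γ, δ, hγ, hδ, rfl⟩
  · exact le_rfl
  · exact rnk_dia_le_left' β γ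
  · exact rnk_dia_le_right γ hβ
  · exact (rnk_dia_le_left' (dia γ β) δ).trans (rnk_dia_le_right γ hβ)

lemma leJ_of_rnk_le {α β : Rl n} (hα : IsDifunctional α) (hβ : IsDifunctional β)
    (h : rnk α ≤ rnk β) : leJ α β := by
  classical
  have hcard : (Im α).ncard ≤ (Im (rinv β)).ncard := by
    rw [← ncard_Im_rinv hβ, ← rnk_eq_ncard_Im, ← rnk_eq_ncard_Im]
    exact h
  obtain ⟨e⟩ : Nonempty ((Im α : Set (Set (Fin n))) ↪ (Im (rinv β) : Set (Set (Fin n)))) := by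
    haveI : Fintype (Im α) := Fintype.ofFinite _
    haveI : Fintype (Im (rinv β)) := Fintype.ofFinite _
    rw [← Nat.card_coe_set_eq, ← Nat.card_coe_set_eq,
        Nat.card_eq_fintype_card, Nat.card_eq_fintype_card] at hcard
    exact Function.Embedding.nonempty_of_card_le hcard
  set σ : Set (Fin n) → Set (Fin n) :=
    fun B => if hB : B ∈ Im α then (e ⟨B, hB⟩ : Set (Fin n)) else ∅ with hσ
  have hσmem : ∀ B ∈ Im α, σ B ∈ Im (rinv β) := by
    intro B hB
    simp only [hσ, dif_pos hB]
    exact (e ⟨B, hB⟩).2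
  have hσinj : ∀ B ∈ Im α, ∀ B' ∈ Im α, σ B = σ B' → B = B' := by
    intro B hB B' hB' hEq
    simp only [hσ, dif_pos hB, dif_pos hB'] at hEq
    have h2 := e.injective (Subtype.ext hEq)
    exact congrArg Subtype.val h2
  -- the two auxiliary difunctional relations
  set γ : Rl n := fun x z => (img α x).Nonempty ∧ z ∈ σ (img α x) with hγdef
  set δ : Rl n := fun y w => ∃ B ∈ Im α, img (rinv β) y = σ B ∧ w ∈ B with hδdef
  have hσne : ∀ B ∈ Im α, (σ B).Nonempty := by
    intro B hB
    obtain ⟨y₀, -, hne⟩ := hσmem B hB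
    exact hne
  have hγimg : ∀ x, (img α x).Nonempty → img γ x = σ (img α x) := by
    intro x hne
    ext z
    exact ⟨fun hz => hz.2, fun hz => ⟨hne, hz⟩⟩
  have hγdf : IsDifunctional γ := by
    show rcomp γ (rcomp (rinv γ) γ) = γ
    funext x z
    apply propext
    constructor
    · rintro ⟨z', ⟨hd1, h1⟩, x', ⟨hd2, h2⟩, hd3, h3⟩
      refine ⟨hd1, ?_⟩
      have e1 : σ (img α x) = σ (img α x') :=
        Im_eq_of_mem (rinv_df hβ) (hσmem _ ⟨x, rfl, hd1⟩) (hσmem _ ⟨x', rfl, hd2⟩) h1 h2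
      rw [e1]; exact h3
    · intro hxz
      exact ⟨z, hxz, x, hxz, hxz⟩
  have hδdf : IsDifunctional δ := by
    show rcomp δ (rcomp (rinv δ) δ) = δ
    funext y w
    apply propext
    constructor
    · rintro ⟨w', ⟨B₁, hB₁, e₁, hw'1⟩, y', ⟨B₂, hB₂, e₂, hw'2⟩, B₃, hB₃, e₃, hw3⟩
      have h12 : B₁ = B₂ := Im_eq_of_mem hα hB₁ hB₂ hw'1 hw'2
      have h23 : B₂ = B₃ := hσinj _ hB₂ _ hB₃ (e₂.symm.trans e₃)
      exact ⟨B₁, hB₁, e₁, by rw [h12, h23]; exact hw3⟩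
    · intro hyw
      exact ⟨w, hyw, y, hyw, hyw⟩
  have hμiff : ∀ x y, (img α x).Nonempty →
      (dia γ β x y ↔ img (rinv β) y = σ (img α x)) := by
    intro x y hne
    constructor
    · rintro ⟨h1, -⟩
      exact ((hγimg x hne).symm.trans h1).symm
    · intro hr
      obtain ⟨z, hz⟩ := hσne _ ⟨x, rfl, hne⟩
      exact ⟨(hγimg x hne).trans hr.symm, z, hne, hz⟩
  refine Or.inr (Or.inr ⟨γ, δ, hγdf, hδdf, ?_⟩)
  funext x w
  apply propext
  constructor
  · intro hxw
    have hne : (img α x).Nonempty := ⟨w, hxw⟩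
    have hBmem : img α x ∈ Im α := ⟨x, rfl, hne⟩
    obtain ⟨y₀, hy₀eq, -⟩ := hσmem _ hBmem
    refine ⟨?_, y₀, (hμiff x y₀ hne).mpr hy₀eq.symm⟩
    ext y
    constructor
    · intro hy
      have hiy := (hμiff x y hne).mp hy
      exact ⟨img α x, hBmem, hiy, hxw⟩
    · rintro ⟨B, hB, hBeq, hwB⟩
      have hBx : B = img α x := by
        obtain ⟨x'', rfl, -⟩ := hB
        exact img_eq_of_df hα hwB hxw
      exact (hμiff x y hne).mpr (hBx ▸ hBeq)
  · rintro ⟨hset, y₁, hμ1⟩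
    have hne : (img α x).Nonempty := by
      obtain ⟨-, z, hz⟩ := hμ1
      exact hz.1
    have h1 : img (rinv β) y₁ = σ (img α x) := (hμiff x y₁ hne).mp hμ1
    have hy₁δ : δ y₁ w := (Set.ext_iff.mp hset y₁).mp hμ1
    obtain ⟨B, hB, hBeq, hwB⟩ := hy₁δ
    have hBx : B = img α x :=
      hσinj B hB (img α x) ⟨x, rfl, hne⟩ (hBeq.symm.trans h1)
    rw [hBx] at hwB
    exact hwB

end Aux

/-- α J β iff rank(α) = rank(β); consequently the J-classes J_r = {α : rank α = r},
0 ≤ r ≤ n, form a chain J₀ < J₁ < ⋯ < J_n. -/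
theorem stmt6 (n : ℕ) (hn : 0 < n) :
    (∀ α β : Rl n, IsDifunctional α → IsDifunctional β →
      ((leJ α β ∧ leJ β α) ↔ rnk α = rnk β)) ∧
    (∀ r s : ℕ, r ≤ s → s ≤ n → ∀ α β : Rl n, IsDifunctional α → IsDifunctional β →
      rnk α = r → rnk β = s → leJ α β) := by
  constructor
  · intro α β hα hβ
    constructor
    · rintro ⟨h1, h2⟩
      exact le_antisymm (rnk_le_of_leJ hβ h1) (rnk_le_of_leJ hα h2)
    · intro h
      exact ⟨leJ_of_rnk_le hα hβ h.le, leJ_of_rnk_le hβ hα h.ge⟩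
  · intro r s hrs hsn α β hα hβ hr hs
    exact leJ_of_rnk_le hα hβ (by rw [hr, hs]; exact hrs)

end DRel
end

section
/- For 0 ≤ r ≤ n, the number of R-classes of the semigroup (D_n, ⋄) contained in the J-class J_r = {α ∈ D_n : rank(α) = r} equals (r+1)·S(n,r+1) + S(n,r), where S(n,k) denotes the Stirling number of the second kind. -/
namespace DRel

lemma ker_mem_nonempty {n : ℕ} (α : Rl n) {A : Set (Fin n)} (hA : A ∈ ker α) : A.Nonempty := by
  obtain ⟨x, hx, rfl⟩ := hA
  exact ⟨x, rfl⟩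

lemma ker_pairwise {n : ℕ} (α : Rl n) : (ker α).Pairwise Disjoint := by
  rintro A ⟨x, hx, rfl⟩ B ⟨y, hy, rfl⟩ hne
  rw [Set.disjoint_left]
  rintro z hzA hzB
  apply hne
  have h : {w | α x w} = {w | α y w} := hzA.symm.trans hzB
  ext x'
  simp only [Set.mem_setOf_eq, h]

lemma exists_difunctional {n : ℕ} (K : Set (Set (Fin n)))
    (hne : ∀ A ∈ K, A.Nonempty) (hdisj : K.Pairwise Disjoint) :
    ∃ α : Rl n, IsDifunctional α ∧ ker α = K := by
  classical
  set c : ∀ A : Set (Fin n), A.Nonempty → Fin n := fun A h => h.choose with hc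
  have hcmem : ∀ (A : Set (Fin n)) (h : A.Nonempty), c A h ∈ A := fun A h => h.choose_spec
  set α : Rl n := fun x y => ∃ A, ∃ hA : A ∈ K, x ∈ A ∧ y = c A (hne A hA) with hα
  have hblock : ∀ {A B : Set (Fin n)}, A ∈ K → B ∈ K → ∀ {x}, x ∈ A → x ∈ B → A = B := by
    intro A B hA hB x hxA hxB
    by_contra hne'
    exact Set.disjoint_left.1 (hdisj hA hB hne') hxA hxB
  have hcinj : ∀ {A B : Set (Fin n)} (hA : A ∈ K) (hB : B ∈ K),
      c A (hne A hA) = c B (hne B hB) → A = B := by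
    intro A B hA hB h
    exact hblock hA hB (hcmem A (hne A hA)) (h ▸ hcmem B (hne B hB))
  have himg : ∀ {A : Set (Fin n)} (hA : A ∈ K) {x : Fin n}, x ∈ A →
      {z | α x z} = {c A (hne A hA)} := by
    intro A hA x hx
    ext z
    simp only [Set.mem_setOf_eq, Set.mem_singleton_iff, hα]
    constructor
    · rintro ⟨B, hB, hxB, rfl⟩
      have hBA : B = A := hblock hB hA hxB hx
      subst hBA; rfl
    · rintro rfl; exact ⟨A, hA, hx, rfl⟩
  have hblockeq : ∀ {A : Set (Fin n)} (hA : A ∈ K) {x : Fin n}, x ∈ A →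
      {x' | {z | α x' z} = {z | α x z}} = A := by
    intro A hA x hx
    have hxα : {z | α x z} = {c A (hne A hA)} := himg hA hx
    ext x'
    simp only [Set.mem_setOf_eq, hxα]
    constructor
    · intro h
      have hmem : α x' (c A (hne A hA)) := by
        have : c A (hne A hA) ∈ {z | α x' z} := by rw [h]; rfl
        exact this
      obtain ⟨B, hB, hxB, hval⟩ := hmem
      have : B = A := hcinj hB hA hval.symm
      exact this ▸ hxB
    · intro hx'
      exact himg hA hx'
  refine ⟨α, ?_, ?_⟩
  · unfold IsDifunctional rcomp rinv
    funext x y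
    apply propext
    constructor
    · rintro ⟨z, hxz, w, hwz, hwy⟩
      obtain ⟨A, hA, hxA, rfl⟩ := hxz
      obtain ⟨B, hB, hwB, hzval⟩ := hwz
      have hBA : B = A := hcinj hB hA hzval.symm
      subst hBA
      obtain ⟨C, hC, hwC, rfl⟩ := hwy
      have hCB : C = B := hblock hC hB hwC hwB
      subst hCB
      exact ⟨C, hC, hxA, rfl⟩
    · intro h
      exact ⟨y, h, x, h, h⟩
  · ext A
    constructor
    · rintro ⟨x, ⟨y, hy⟩, rfl⟩
      obtain ⟨B, hB, hxB, rfl⟩ := hy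
      rw [hblockeq hB hxB]
      exact hB
    · intro hA
      obtain ⟨x, hx⟩ := hne A hA
      exact ⟨x, ⟨c A (hne A hA), ⟨A, hA, hx, rfl⟩⟩, (hblockeq hA hx).symm⟩

lemma classSet_eq (n r : ℕ) :
    {K : Set (Set (Fin n)) | ∃ α : Rl n, IsDifunctional α ∧ rnk α = r ∧ ker α = K}
      = {K : Set (Set (Fin n)) | K.ncard = r ∧ (∀ A ∈ K, A.Nonempty) ∧ K.Pairwise Disjoint} := by
  ext K
  simp only [Set.mem_setOf_eq]
  constructor
  · rintro ⟨α, hd, hrk, rfl⟩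
    exact ⟨hrk, fun A hA => ker_mem_nonempty α hA, ker_pairwise α⟩
  · rintro ⟨hcard, hne, hdisj⟩
    obtain ⟨α, hd, hk⟩ := exists_difunctional K hne hdisj
    exact ⟨α, hd, by show (ker α).ncard = r; rw [hk]; exact hcard, hk⟩



open scoped Classical in
noncomputable def PF (n r : ℕ) : Finset (Finset (Finset ℕ)) :=
  (((Finset.range n).powerset.erase ∅).powerset).filter
    (fun K : Finset (Finset ℕ) => K.card = r ∧ ∀ A ∈ K, ∀ B ∈ K, A ≠ B → Disjoint A B)

lemma mem_PF {n r : ℕ} {K : Finset (Finset ℕ)} :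
    K ∈ PF n r ↔ (∀ A ∈ K, A ⊆ Finset.range n ∧ A.Nonempty) ∧ K.card = r ∧
      ∀ A ∈ K, ∀ B ∈ K, A ≠ B → Disjoint A B := by
  unfold PF
  rw [Finset.mem_filter, Finset.mem_powerset]
  constructor
  · rintro ⟨h1, h2, h3⟩
    refine ⟨fun A hA => ?_, h2, h3⟩
    have := h1 hA
    rw [Finset.mem_erase, Finset.mem_powerset] at this
    exact ⟨this.2, Finset.nonempty_iff_ne_empty.2 this.1⟩
  · rintro ⟨h1, h2, h3⟩
    refine ⟨fun A hA => ?_, h2, h3⟩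
    rw [Finset.mem_erase, Finset.mem_powerset]
    exact ⟨Finset.nonempty_iff_ne_empty.1 (h1 A hA).2, (h1 A hA).1⟩

lemma PF_card (n r : ℕ) : (PF n r).card = stirling (n + 1) (r + 1) := by
  induction n generalizing r with
  | zero =>
    have hempty : ∀ K ∈ PF 0 r, K = ∅ := by
      intro K hK
      rw [mem_PF] at hK
      rw [← Finset.subset_empty]
      intro A hA
      obtain ⟨hsub, ⟨x, hx⟩⟩ := hK.1 A hA
      simpa using hsub hx
    match r with
    | 0 =>
      have : PF 0 0 = {∅} := by
        ext K
        simp only [Finset.mem_singleton]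
        constructor
        · exact fun h => hempty K h
        · rintro rfl
          rw [mem_PF]
          simp
      rw [this]
      rfl
    | r + 1 =>
      have : PF 0 (r + 1) = ∅ := by
        ext K
        simp only [Finset.notMem_empty, iff_false]
        intro hK
        have h0 := hempty K hK
        rw [mem_PF] at hK
        rw [h0] at hK
        simp at hK
      rw [this]
      show 0 = stirling 1 (r + 2)
      show 0 = (r + 2) * stirling 0 (r + 2) + stirling 0 (r + 1)
      rfl
  | succ n ih =>
    classical
    -- split by whether n occurs in some block
    have hsplit1 := Finset.card_filter_add_card_filter_not
      (s := PF (n + 1) r) (p := fun K : Finset (Finset ℕ) => ∀ A ∈ K, n ∉ A)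
    set A1 := (PF (n + 1) r).filter (fun K : Finset (Finset ℕ) => ∀ A ∈ K, n ∉ A) with hA1
    set B := (PF (n + 1) r).filter (fun K : Finset (Finset ℕ) => ¬ ∀ A ∈ K, n ∉ A) with hB
    have hsplit2 := Finset.card_filter_add_card_filter_not
      (s := B) (p := fun K : Finset (Finset ℕ) => {n} ∈ K)
    set B2 := B.filter (fun K : Finset (Finset ℕ) => ({n} : Finset ℕ) ∈ K) with hB2
    set B3 := B.filter (fun K : Finset (Finset ℕ) => ¬ ({n} : Finset ℕ) ∈ K) with hB3
    -- A1 = PF n r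
    have hA1eq : A1 = PF n r := by
      ext K
      rw [hA1, Finset.mem_filter, mem_PF, mem_PF]
      constructor
      · rintro ⟨⟨h1, h2, h3⟩, h4⟩
        refine ⟨fun A hA => ⟨?_, (h1 A hA).2⟩, h2, h3⟩
        intro x hx
        have hx1 := (h1 A hA).1 hx
        rw [Finset.mem_range] at hx1 ⊢
        rcases Nat.lt_succ_iff_lt_or_eq.1 hx1 with h | h
        · exact h
        · exact absurd (h ▸ hx) (h4 A hA)
      · rintro ⟨h1, h2, h3⟩
        refine ⟨⟨fun A hA => ⟨?_, (h1 A hA).2⟩, h2, h3⟩, fun A hA hn => ?_⟩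
        · exact (h1 A hA).1.trans (Finset.range_subset_range.2 (Nat.le_succ n))
        · have := (h1 A hA).1 hn
          simp at this
    -- B2 card
    have hB2card : B2.card = stirling (n + 1) r := by
      match r with
      | 0 =>
        have : B2 = ∅ := by
          ext K
          simp only [Finset.notMem_empty, iff_false, hB2, Finset.mem_filter, hB]
          rintro ⟨⟨hK, -⟩, hmem⟩
          rw [mem_PF] at hK
          have := Finset.card_eq_zero.1 hK.2.1
          rw [this] at hmem
          simp at hmem
        rw [this]
        rfl
      | r + 1 =>
        rw [← ih r]
        apply Finset.card_bij (fun K _ => K.erase {n})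
        · -- maps into PF n r
          intro K hK
          rw [hB2, Finset.mem_filter, hB, Finset.mem_filter] at hK
          obtain ⟨⟨hK, -⟩, hmem⟩ := hK
          rw [mem_PF] at hK
          obtain ⟨h1, h2, h3⟩ := hK
          rw [mem_PF]
          refine ⟨?_, ?_, ?_⟩
          · intro A hA
            rw [Finset.mem_erase] at hA
            obtain ⟨hne, hA⟩ := hA
            refine ⟨?_, (h1 A hA).2⟩
            intro x hx
            have hx1 := (h1 A hA).1 hx
            rw [Finset.mem_range] at hx1 ⊢
            rcases Nat.lt_succ_iff_lt_or_eq.1 hx1 with h | h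
            · exact h
            · exact (Finset.disjoint_left.1 (h3 A hA ({n} : Finset ℕ) hmem hne) hx
                (by simp [h])).elim
          · rw [Finset.card_erase_of_mem hmem, h2]
            omega
          · intro A hA C hC hne
            exact h3 A (Finset.mem_of_mem_erase hA) C (Finset.mem_of_mem_erase hC) hne
        · -- injective
          intro K hK K' hK' heq
          rw [hB2, Finset.mem_filter] at hK hK'
          rw [← Finset.insert_erase hK.2, ← Finset.insert_erase hK'.2, heq]
        · -- surjective
          intro K' hK'
          rw [mem_PF] at hK'
          obtain ⟨h1, h2, h3⟩ := hK'
          have hnotmem : {n} ∉ K' := by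
            intro h
            have := (h1 ({n} : Finset ℕ) h).1 (Finset.mem_singleton_self n)
            simp at this
          refine ⟨insert {n} K', ?_, by rw [Finset.erase_insert hnotmem]⟩
          rw [hB2, Finset.mem_filter, hB, Finset.mem_filter]
          have hmemPF : insert {n} K' ∈ PF (n + 1) (r + 1) := by
            rw [mem_PF]
            refine ⟨?_, ?_, ?_⟩
            · intro A hA
              rw [Finset.mem_insert] at hA
              rcases hA with rfl | hA
              · exact ⟨by simp, ⟨n, by simp⟩⟩
              · exact ⟨(h1 A hA).1.trans (Finset.range_subset_range.2 (Nat.le_succ n)), (h1 A hA).2⟩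
            · rw [Finset.card_insert_of_notMem hnotmem, h2]
            · intro A hA C hC hne
              have hdisj : ∀ D ∈ K', Disjoint ({n} : Finset ℕ) D := by
                intro D hD
                rw [Finset.disjoint_left]
                intro x hx hxD
                rw [Finset.mem_singleton] at hx
                subst hx
                have := (h1 D hD).1 hxD
                simp at this
              rw [Finset.mem_insert] at hA hC
              rcases hA with rfl | hA <;> rcases hC with rfl | hC
              · exact absurd rfl hne
              · exact hdisj C hC
              · exact (hdisj A hA).symm
              · exact h3 A hA C hC hne
          refine ⟨⟨hmemPF, ?_⟩, by simp⟩
          push_neg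
          exact ⟨{n}, by simp, by simp⟩
    -- B3 card
    have hB3card : B3.card = r * (PF n r).card := by
      have hsig : ((PF n r).sigma (fun K => K)).card = r * (PF n r).card := by
        rw [Finset.card_sigma]
        calc ∑ K ∈ PF n r, K.card = ∑ K ∈ PF n r, r :=
              Finset.sum_congr rfl (fun K hK => (mem_PF.1 hK).2.1)
          _ = r * (PF n r).card := by rw [Finset.sum_const, smul_eq_mul, mul_comm]
      rw [← hsig]
      symm
      apply Finset.card_bij (fun (p : Σ _ : Finset (Finset ℕ), Finset ℕ) _ => insert (insert n p.snd) (p.fst.erase p.snd))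
      · -- maps into B3
        rintro ⟨K, A⟩ hp
        rw [Finset.mem_sigma] at hp
        obtain ⟨hK, hA⟩ := hp
        rw [mem_PF] at hK
        obtain ⟨h1, h2, h3⟩ := hK
        have hAsub := (h1 A hA).1
        have hAne := (h1 A hA).2
        have hnA : n ∉ A := fun h => by simpa using hAsub h
        have hexn : ∀ C ∈ K, n ∉ C := by
          intro C hC h
          simpa using (h1 C hC).1 h
        have hnew_notmem : insert n A ∉ K.erase A := by
          intro h
          exact hexn _ (Finset.mem_of_mem_erase h) (Finset.mem_insert_self n A)
        rw [hB3, Finset.mem_filter, hB, Finset.mem_filter]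
        have hmemPF : insert (insert n A) (K.erase A) ∈ PF (n + 1) r := by
          rw [mem_PF]
          refine ⟨?_, ?_, ?_⟩
          · intro C hC
            rw [Finset.mem_insert] at hC
            rcases hC with rfl | hC
            · constructor
              · intro x hx
                rw [Finset.mem_insert] at hx
                rcases hx with rfl | hx
                · simp
                · exact (hAsub.trans (Finset.range_subset_range.2 (Nat.le_succ n))) hx
              · exact ⟨n, Finset.mem_insert_self n A⟩
            · have hC' := Finset.mem_of_mem_erase hC
              exact ⟨(h1 C hC').1.trans (Finset.range_subset_range.2 (Nat.le_succ n)), (h1 C hC').2⟩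
          · rw [Finset.card_insert_of_notMem hnew_notmem,
              Finset.card_erase_of_mem hA, h2]
            have : 1 ≤ r := by
              rw [← h2]
              exact Finset.card_pos.2 ⟨A, hA⟩
            omega
          · intro C hC D hD hne
            have key : ∀ D' ∈ K.erase A, Disjoint (insert n A) D' := by
              intro D' hD'
              have hD'' := Finset.mem_of_mem_erase hD'
              have hne' := (Finset.mem_erase.1 hD').1
              rw [Finset.disjoint_left]
              intro x hx hxD
              rw [Finset.mem_insert] at hx
              rcases hx with rfl | hx
              · exact hexn D' hD'' hxD
              · exact Finset.disjoint_left.1 (h3 A hA D' hD'' (Ne.symm hne')) hx hxD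
            rw [Finset.mem_insert] at hC hD
            rcases hC with rfl | hC <;> rcases hD with rfl | hD
            · exact absurd rfl hne
            · exact key D hD
            · exact (key C hC).symm
            · exact h3 C (Finset.mem_of_mem_erase hC) D (Finset.mem_of_mem_erase hD) hne
        refine ⟨⟨hmemPF, ?_⟩, ?_⟩
        · push_neg
          exact ⟨insert n A, Finset.mem_insert_self _ _, Finset.mem_insert_self n A⟩
        · -- {n} not in the new family
          intro h
          rw [Finset.mem_insert] at h
          rcases h with h | h
          · obtain ⟨x, hx⟩ := hAne
            have : x ∈ ({n} : Finset ℕ) := h ▸ Finset.mem_insert_of_mem hx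
            rw [Finset.mem_singleton] at this
            subst this
            exact hnA hx
          · exact hexn _ (Finset.mem_of_mem_erase h) (by simp)
      · -- injective
        rintro ⟨K, A⟩ hp ⟨K', A'⟩ hp' heq
        rw [Finset.mem_sigma] at hp hp'
        obtain ⟨hK, hA⟩ := hp
        obtain ⟨hK', hA'⟩ := hp'
        dsimp only at hK hA hK' hA' heq ⊢
        have hn_notin : ∀ {L : Finset (Finset ℕ)} {E : Finset ℕ}, L ∈ PF n r → E ∈ L → n ∉ E := by
          intro L E hL hE h
          simpa using ((mem_PF.1 hL).1 E hE).1 h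
        have hnA : n ∉ A := hn_notin hK hA
        have hnA' : n ∉ A' := hn_notin hK' hA'
        -- insert n A' is a member of LHS
        have hmem : insert n A' ∈ insert (insert n A) (K.erase A) := by
          rw [heq]; exact Finset.mem_insert_self _ _
        rw [Finset.mem_insert] at hmem
        have hAA : insert n A = insert n A' := by
          rcases hmem with h | h
          · exact h.symm
          · exact absurd (Finset.mem_insert_self n A') (hn_notin hK (Finset.mem_of_mem_erase h))
        have hAeq : A = A' := by
          have : (insert n A).erase n = (insert n A').erase n := by rw [hAA]
          rwa [Finset.erase_insert hnA, Finset.erase_insert hnA'] at this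
        subst hAeq
        have hKerase : K.erase A = K'.erase A := by
          have h1 : (insert (insert n A) (K.erase A)).erase (insert n A) = K.erase A :=
            Finset.erase_insert (fun h =>
              hn_notin hK (Finset.mem_of_mem_erase h) (Finset.mem_insert_self n A))
          have h2 : (insert (insert n A) (K'.erase A)).erase (insert n A) = K'.erase A :=
            Finset.erase_insert (fun h =>
              hn_notin hK' (Finset.mem_of_mem_erase h) (Finset.mem_insert_self n A))
          rw [← h1, ← h2, heq]
        have : K = K' := by
          rw [← Finset.insert_erase hA, ← Finset.insert_erase hA', hKerase]
        subst this
        rfl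
      · -- surjective
        intro L hL
        rw [hB3, Finset.mem_filter, hB, Finset.mem_filter] at hL
        obtain ⟨⟨hLPF, hLn⟩, hLsing⟩ := hL
        push_neg at hLn
        obtain ⟨Bk, hBk, hnBk⟩ := hLn
        rw [mem_PF] at hLPF
        obtain ⟨h1, h2, h3⟩ := hLPF
        set A := Bk.erase n with hAdef
        have hBkA : insert n A = Bk := Finset.insert_erase hnBk
        have hAne : A.Nonempty := by
          by_contra h
          rw [Finset.not_nonempty_iff_eq_empty] at h
          apply hLsing
          have : Bk = {n} := by
            rw [← hBkA, h]; rfl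
          rwa [← this]
        have hAsub : A ⊆ Finset.range n := by
          intro x hx
          rw [hAdef, Finset.mem_erase] at hx
          have := (h1 Bk hBk).1 hx.2
          rw [Finset.mem_range] at this ⊢
          omega
        have hothers : ∀ C ∈ L.erase Bk, n ∉ C ∧ C ⊆ Finset.range n := by
          intro C hC
          have hC' := Finset.mem_of_mem_erase hC
          have hne' := (Finset.mem_erase.1 hC).1
          have hnC : n ∉ C := fun h =>
            Finset.disjoint_left.1 (h3 C hC' Bk hBk hne') h hnBk
          refine ⟨hnC, fun x hx => ?_⟩
          have := (h1 C hC').1 hx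
          rw [Finset.mem_range] at this ⊢
          rcases Nat.lt_succ_iff_lt_or_eq.1 this with h | h
          · exact h
          · exact absurd (h ▸ hx) hnC
        have hAnotmem : A ∉ L.erase Bk := by
          intro h
          have hA' := Finset.mem_of_mem_erase h
          have hne' := (Finset.mem_erase.1 h).1
          obtain ⟨x, hx⟩ := hAne
          exact Finset.disjoint_left.1 (h3 A hA' Bk hBk hne') hx
            (Finset.mem_of_mem_erase (hAdef ▸ hx))
        refine ⟨⟨insert A (L.erase Bk), A⟩, ?_, ?_⟩
        · rw [Finset.mem_sigma]
          refine ⟨?_, Finset.mem_insert_self _ _⟩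
          rw [mem_PF]
          refine ⟨?_, ?_, ?_⟩
          · intro C hC
            rw [Finset.mem_insert] at hC
            rcases hC with rfl | hC
            · exact ⟨hAsub, hAne⟩
            · exact ⟨(hothers C hC).2, (h1 C (Finset.mem_of_mem_erase hC)).2⟩
          · rw [Finset.card_insert_of_notMem hAnotmem, Finset.card_erase_of_mem hBk, h2]
            have : 1 ≤ r := by
              rw [← h2]
              exact Finset.card_pos.2 ⟨Bk, hBk⟩
            omega
          · intro C hC D hD hne
            have key : ∀ D' ∈ L.erase Bk, Disjoint A D' := by
              intro D' hD'
              have hD'' := Finset.mem_of_mem_erase hD'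
              have hne' := (Finset.mem_erase.1 hD').1
              rw [Finset.disjoint_left]
              intro x hx hxD
              exact Finset.disjoint_left.1 (h3 Bk hBk D' hD'' (Ne.symm hne'))
                (Finset.mem_of_mem_erase (hAdef ▸ hx)) hxD
            rw [Finset.mem_insert] at hC hD
            rcases hC with rfl | hC <;> rcases hD with rfl | hD
            · exact absurd rfl hne
            · exact key D hD
            · exact (key C hC).symm
            · exact h3 C (Finset.mem_of_mem_erase hC) D (Finset.mem_of_mem_erase hD) hne
        · show insert (insert n A) ((insert A (L.erase Bk)).erase A) = L
          rw [Finset.erase_insert hAnotmem, hBkA, Finset.insert_erase hBk]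
    -- assemble
    rw [hA1eq] at hsplit1
    rw [hB2card, hB3card, ih] at hsplit2
    rw [← hsplit1, ← hsplit2, ih]
    show _ = (r + 1) * stirling (n + 1) (r + 1) + stirling (n + 1) r
    ring

lemma ncard_S (n r : ℕ) :
    {K : Set (Set (Fin n)) | K.ncard = r ∧ (∀ A ∈ K, A.Nonempty) ∧ K.Pairwise Disjoint}.ncard
      = (PF n r).card := by
  classical
  set S : Set (Set (Set (Fin n))) :=
    {K : Set (Set (Fin n)) | K.ncard = r ∧ (∀ A ∈ K, A.Nonempty) ∧ K.Pairwise Disjoint} with hS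
  set f : Set (Set (Fin n)) → Finset (Finset ℕ) := fun K =>
    ((Set.toFinite {A : Finset (Fin n) | ↑A ∈ K}).toFinset).image
      (fun A : Finset (Fin n) => A.image Fin.val) with hf
  have hmemf : ∀ (K : Set (Set (Fin n))) (B : Finset ℕ),
      B ∈ f K ↔ ∃ A : Finset (Fin n), ↑A ∈ K ∧ A.image Fin.val = B := by
    intro K B
    simp [hf, Finset.mem_image, Set.Finite.mem_toFinset]
  have hval : Function.Injective (Fin.val : Fin n → ℕ) := Fin.val_injective
  have hfinj' : Function.Injective (fun A : Finset (Fin n) => A.image Fin.val) :=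
    Finset.image_injective hval
  have key : ∀ K K' : Set (Set (Fin n)), f K = f K' → K ⊆ K' := by
    intro K K' h A hA
    have hAfin : A.Finite := Set.toFinite A
    have h1 : hAfin.toFinset.image Fin.val ∈ f K :=
      (hmemf _ _).2 ⟨hAfin.toFinset, by rw [Set.Finite.coe_toFinset]; exact hA, rfl⟩
    rw [h] at h1
    obtain ⟨A', hA', heq⟩ := (hmemf _ _).1 h1
    have hAA : A' = hAfin.toFinset := hfinj' heq
    have : (↑A' : Set (Fin n)) = A := by rw [hAA, Set.Finite.coe_toFinset]
    exact this ▸ hA'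
  have hfinj : Function.Injective f := by
    intro K K' h
    exact Set.Subset.antisymm (key K K' h) (key K' K h.symm)
  have himg : f '' S = ↑(PF n r) := by
    ext F
    simp only [Set.mem_image, Finset.coe_sort_coe, Finset.mem_coe]
    constructor
    · rintro ⟨K, hK, rfl⟩
      rw [hS, Set.mem_setOf_eq] at hK
      obtain ⟨hcard, hne, hdisj⟩ := hK
      rw [mem_PF]
      refine ⟨?_, ?_, ?_⟩
      · intro B hB
        obtain ⟨A, hA, rfl⟩ := (hmemf _ _).1 hB
        constructor
        · intro x hx
          obtain ⟨a, _, rfl⟩ := Finset.mem_image.1 hx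
          exact Finset.mem_range.2 a.isLt
        · obtain ⟨x, hx⟩ := hne _ hA
          exact ⟨(x : ℕ), Finset.mem_image_of_mem _ hx⟩
      · rw [hf]
        rw [Finset.card_image_of_injective _ hfinj']
        have h1 : K = (fun A : Finset (Fin n) => (↑A : Set (Fin n))) ''
            {A : Finset (Fin n) | ↑A ∈ K} := by
          ext C
          constructor
          · intro hC
            exact ⟨(Set.toFinite C).toFinset, by
              simp only [Set.mem_setOf_eq, Set.Finite.coe_toFinset]; exact hC,
              (Set.Finite.coe_toFinset _)⟩
          · rintro ⟨A, hA, rfl⟩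
            exact hA
        have h2 : Set.ncard {A : Finset (Fin n) | ↑A ∈ K} = K.ncard := by
          conv_rhs => rw [h1]
          rw [Set.ncard_image_of_injective _ Finset.coe_injective]
        rw [← Set.ncard_eq_toFinset_card _ (Set.toFinite _), h2, hcard]
      · intro B hB C hC hne'
        obtain ⟨A, hA, rfl⟩ := (hmemf _ _).1 hB
        obtain ⟨A', hA', rfl⟩ := (hmemf _ _).1 hC
        have hAA : A ≠ A' := fun h => hne' (by rw [h])
        have hcoene : (↑A : Set (Fin n)) ≠ ↑A' := fun h => hAA (Finset.coe_injective h)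
        have hd := hdisj hA hA' hcoene
        rw [Finset.disjoint_left]
        intro x hx hx'
        obtain ⟨a, ha, rfl⟩ := Finset.mem_image.1 hx
        obtain ⟨a', ha', haa⟩ := Finset.mem_image.1 hx'
        have : a' = a := hval haa
        subst this
        exact Set.disjoint_left.1 hd (by exact ha) (by exact ha')
    · intro hF
      rw [mem_PF] at hF
      obtain ⟨h1, h2, h3⟩ := hF
      set g : Finset ℕ → Set (Fin n) := fun B => {x : Fin n | (x : ℕ) ∈ B} with hg
      have himgval : ∀ B ∈ F, Fin.val '' (g B) = ↑B := by
        intro B hB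
        ext b
        constructor
        · rintro ⟨x, hx, rfl⟩
          exact hx
        · intro hb
          have hbn : b < n := Finset.mem_range.1 ((h1 B hB).1 hb)
          exact ⟨⟨b, hbn⟩, hb, rfl⟩
      have hginjOn : Set.InjOn g ↑F := by
        intro B hB B' hB' h
        have : Fin.val '' (g B) = Fin.val '' (g B') := by rw [h]
        rw [himgval B hB, himgval B' hB'] at this
        exact Finset.coe_injective this
      have hfinsversion : ∀ (B : Finset ℕ), B ∈ F → ∀ A : Finset (Fin n),
          (↑A : Set (Fin n)) = g B → A.image Fin.val = B := by
        intro B hB A hA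
        apply Finset.coe_injective
        rw [Finset.coe_image, hA, himgval B hB]
      refine ⟨g '' ↑F, ?_, ?_⟩
      · rw [hS, Set.mem_setOf_eq]
        refine ⟨?_, ?_, ?_⟩
        · rw [Set.ncard_image_of_injOn hginjOn, Set.ncard_coe_finset, h2]
        · rintro A ⟨B, hB, rfl⟩
          obtain ⟨b, hb⟩ := (h1 B (by exact hB)).2
          have hbn : b < n := Finset.mem_range.1 ((h1 B (by exact hB)).1 hb)
          exact ⟨⟨b, hbn⟩, hb⟩
        · rintro A ⟨B, hB, rfl⟩ A' ⟨B', hB', rfl⟩ hne'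
          have hBB : B ≠ B' := fun h => hne' (by rw [h])
          have hd := h3 B (by exact hB) B' (by exact hB') hBB
          rw [Set.disjoint_left]
          intro x hx hx'
          exact Finset.disjoint_left.1 hd hx hx'
      · ext B'
        rw [hmemf]
        constructor
        · rintro ⟨A, hA, rfl⟩
          obtain ⟨B, hB, hgB⟩ := hA
          have hBF : B ∈ F := hB
          rw [hfinsversion B hBF A hgB.symm]
          exact hBF
        · intro hB'
          refine ⟨(Set.toFinite (g B')).toFinset, ?_, ?_⟩
          · rw [Set.Finite.coe_toFinset]
            exact ⟨B', hB', rfl⟩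
          · exact hfinsversion B' hB' _ (Set.Finite.coe_toFinset _)
  rw [← Set.ncard_coe_finset, ← himg, Set.ncard_image_of_injective _ hfinj]


/-- The number of R-classes of (D_n, ⋄) in J_r (i.e. the number of kernels of elements of
rank r) equals (r+1)·S(n,r+1) + S(n,r). -/
theorem stmt8 (n r : ℕ) (hn : 0 < n) (hr : r ≤ n) :
    Set.ncard {K : Set (Set (Fin n)) | ∃ α : Rl n, IsDifunctional α ∧ rnk α = r ∧ ker α = K}
      = (r + 1) * stirling n (r + 1) + stirling n r := by
  rcases n with _ | n
  · omega
  rcases r with _ | r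
  · rw [classSet_eq, ncard_S, PF_card]
    rfl
  · rw [classSet_eq, ncard_S, PF_card]
    rfl

end DRel
end

section
/- For 1 ≤ r ≤ n, the H-class of any idempotent in the J-class J_r of (D_n, ⋄) is a group isomorphic to the symmetric group S_r. -/
namespace DRel

/-- The H-class of an idempotent ε of rank r in (D_n, ⋄). -/
def Hclass {n : ℕ} (ε : Rl n) : Set (Rl n) :=
  {β | IsDifunctional β ∧ leR β ε ∧ leR ε β ∧ leL β ε ∧ leL ε β}

/-! ### Auxiliary machinery -/

private lemma rl_ext {n : ℕ} {α β : Rl n} (h : ∀ x y, α x y ↔ β x y) : α = β :=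
  funext fun x => funext fun y => propext (h x y)

/-- The difunctional relation `⋃ i, C i × C (q i)` for blocks `C` and a map `q` on indices. -/
def betaOf {n r : ℕ} (C : Fin r → Set (Fin n)) (q : Fin r → Fin r) : Rl n :=
  fun x y => ∃ i, x ∈ C i ∧ y ∈ C (q i)

section Aux

variable {n r : ℕ} {C : Fin r → Set (Fin n)}

lemma betaOf_difunctional (hdj : ∀ i j x, x ∈ C i → x ∈ C j → i = j)
    (q : Fin r → Fin r) : IsDifunctional (betaOf C q) := by
  apply rl_ext; intro x y
  simp only [rcomp, rinv, betaOf]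
  constructor
  · rintro ⟨z, ⟨i, hxi, hzi⟩, w, ⟨i', hwi', hzi'⟩, ⟨i'', hwi'', hyi''⟩⟩
    have h1 : q i = q i' := hdj _ _ _ hzi hzi'
    have h2 : i' = i'' := hdj _ _ _ hwi' hwi''
    refine ⟨i, hxi, ?_⟩
    rw [h1, h2]; exact hyi''
  · rintro ⟨i, hxi, hyi⟩
    exact ⟨y, ⟨i, hxi, hyi⟩, x, ⟨i, hxi, hyi⟩, ⟨i, hxi, hyi⟩⟩

lemma betaOf_row (hdj : ∀ i j x, x ∈ C i → x ∈ C j → i = j)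
    {q : Fin r → Fin r} {x : Fin n} {i : Fin r} (hx : x ∈ C i) :
    {z | betaOf C q x z} = C (q i) := by
  ext z
  simp only [Set.mem_setOf_eq, betaOf]
  constructor
  · rintro ⟨j, hxj, hz⟩; rw [hdj i j x hx hxj]; exact hz
  · exact fun hz => ⟨i, hx, hz⟩

lemma betaOf_col (hdj : ∀ i j x, x ∈ C i → x ∈ C j → i = j)
    {q : Fin r → Fin r} (hq : Function.Injective q) {y : Fin n} {i : Fin r}
    (hy : y ∈ C (q i)) :
    {w | betaOf C q w y} = C i := by
  ext w
  simp only [Set.mem_setOf_eq, betaOf]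
  constructor
  · rintro ⟨j, hwj, hyj⟩
    have hji : q j = q i := hdj _ _ _ hyj hy
    rwa [hq hji] at hwj
  · exact fun hw => ⟨i, hw, hy⟩

lemma dia_betaOf (hne : ∀ i, (C i).Nonempty)
    (hdj : ∀ i j x, x ∈ C i → x ∈ C j → i = j)
    {q1 q2 : Fin r → Fin r} (hq2 : Function.Injective q2) :
    dia (betaOf C q1) (betaOf C q2) = betaOf C (fun i => q2 (q1 i)) := by
  apply rl_ext; intro x y
  simp only [dia]
  constructor
  · rintro ⟨hrc, z, i, hxi, hzi⟩
    have hrow : {z | betaOf C q1 x z} = C (q1 i) := betaOf_row hdj hxi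
    have hcol : {w | betaOf C q2 w y} = C (q1 i) := by rw [← hrc, hrow]
    obtain ⟨w, hw⟩ := hne (q1 i)
    have hwy : betaOf C q2 w y := by
      have : w ∈ {w | betaOf C q2 w y} := by rw [hcol]; exact hw
      exact this
    obtain ⟨j, hwj, hyj⟩ := hwy
    have hji : j = q1 i := hdj _ _ _ hwj hw
    refine ⟨i, hxi, ?_⟩
    show y ∈ C (q2 (q1 i))
    rw [← hji]
    exact hyj
  · rintro ⟨i, hxi, hy⟩
    refine ⟨?_, ?_⟩
    · rw [betaOf_row hdj hxi, betaOf_col hdj hq2 hy]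
    · obtain ⟨z, hz⟩ := hne (q1 i)
      exact ⟨z, i, hxi, hz⟩

lemma betaOf_inj (hne : ∀ i, (C i).Nonempty)
    (hdj : ∀ i j x, x ∈ C i → x ∈ C j → i = j)
    {q1 q2 : Fin r → Fin r} (h : betaOf C q1 = betaOf C q2) : q1 = q2 := by
  funext i
  obtain ⟨x, hx⟩ := hne i
  obtain ⟨y, hy⟩ := hne (q1 i)
  have h1 : betaOf C q1 x y := ⟨i, hx, hy⟩
  rw [h] at h1
  obtain ⟨j, hxj, hyj⟩ := h1
  have hji : j = i := hdj _ _ _ hxj hx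
  subst hji
  exact hdj _ _ _ hy hyj

lemma betaOf_mem_Hclass (hne : ∀ i, (C i).Nonempty)
    (hdj : ∀ i j x, x ∈ C i → x ∈ C j → i = j) (q : Equiv.Perm (Fin r)) :
    betaOf C ⇑q ∈ Hclass (betaOf C id) := by
  have hdif : ∀ p : Fin r → Fin r, IsDifunctional (betaOf C p) :=
    fun p => betaOf_difunctional hdj p
  have hq1 : (fun i => ⇑q⁻¹ (⇑q i)) = (id : Fin r → Fin r) := by
    funext i; simp
  have hq2 : (fun i => ⇑q (⇑q⁻¹ i)) = (id : Fin r → Fin r) := by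
    funext i; simp
  have e1 : dia (betaOf C id) (betaOf C ⇑q) = betaOf C ⇑q := by
    rw [dia_betaOf hne hdj q.injective]; rfl
  have e2 : dia (betaOf C ⇑q) (betaOf C ⇑q⁻¹) = betaOf C id := by
    rw [dia_betaOf hne hdj q⁻¹.injective, hq1]
  have e3 : dia (betaOf C ⇑q) (betaOf C id) = betaOf C ⇑q := by
    rw [dia_betaOf hne hdj Function.injective_id]; rfl
  have e4 : dia (betaOf C ⇑q⁻¹) (betaOf C ⇑q) = betaOf C id := by
    rw [dia_betaOf hne hdj q.injective, hq2]
  exact ⟨hdif ⇑q,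
    Or.inr ⟨betaOf C ⇑q, hdif ⇑q, e1.symm⟩,
    Or.inr ⟨betaOf C ⇑q⁻¹, hdif ⇑q⁻¹, e2.symm⟩,
    Or.inr ⟨betaOf C ⇑q, hdif ⇑q, e3.symm⟩,
    Or.inr ⟨betaOf C ⇑q⁻¹, hdif ⇑q⁻¹, e4.symm⟩⟩

lemma Hclass_sub (hne : ∀ i, (C i).Nonempty)
    (hdj : ∀ i j x, x ∈ C i → x ∈ C j → i = j)
    {β : Rl n} (hβ : β ∈ Hclass (betaOf C id)) :
    ∃ q : Equiv.Perm (Fin r), β = betaOf C ⇑q := by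
  set ε : Rl n := betaOf C id with hepsdef
  obtain ⟨hβd, hR1, hR2, hL1, hL2⟩ := hβ
  have hid : dia ε ε = ε := by
    rw [hepsdef, dia_betaOf hne hdj Function.injective_id]; rfl
  -- extract the four translations (handling the `= ε` unit cases via idempotency)
  obtain ⟨γ1, hγ1⟩ : ∃ γ, β = dia ε γ := by
    rcases hR1 with h | ⟨γ, _, h⟩
    · exact ⟨ε, by rw [h, hid]⟩
    · exact ⟨γ, h⟩
  obtain ⟨γ2, hγ2⟩ : ∃ γ, ε = dia β γ := by
    rcases hR2 with h | ⟨γ, _, h⟩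
    · exact ⟨ε, by rw [← h]; exact hid.symm⟩
    · exact ⟨γ, h⟩
  obtain ⟨γ3, hγ3⟩ : ∃ γ, β = dia γ ε := by
    rcases hL1 with h | ⟨γ, _, h⟩
    · exact ⟨ε, by rw [hid, h]⟩
    · exact ⟨γ, h⟩
  obtain ⟨γ4, hγ4⟩ : ∃ γ, ε = dia γ β := by
    rcases hL2 with h | ⟨γ, _, h⟩
    · exact ⟨ε, by rw [← h]; exact hid.symm⟩
    · exact ⟨γ, h⟩
  have hγ1' : ∀ x y, β x y ↔ ({z | ε x z} = {z | γ1 z y} ∧ ∃ z, ε x z) := by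
    intro x y; rw [hγ1]; exact Iff.rfl
  have hγ2' : ∀ x y, ε x y ↔ ({z | β x z} = {z | γ2 z y} ∧ ∃ z, β x z) := by
    intro x y; rw [hγ2]; exact Iff.rfl
  have hγ3' : ∀ x y, β x y ↔ ({z | γ3 x z} = {z | ε z y} ∧ ∃ z, γ3 x z) := by
    intro x y; rw [hγ3]; exact Iff.rfl
  have hγ4' : ∀ x y, ε x y ↔ ({z | γ4 x z} = {z | β z y} ∧ ∃ z, γ4 x z) := by
    intro x y; rw [hγ4]; exact Iff.rfl
  -- transfer of rows, columns, domains, codomains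
  have rowβ_eq : ∀ x x', {z | ε x z} = {z | ε x' z} → {z | β x z} = {z | β x' z} := by
    intro x x' h
    have h' : ∀ w, ε x w ↔ ε x' w := fun w => Set.ext_iff.mp h w
    ext z
    simp only [Set.mem_setOf_eq, hγ1', h, h']
  have rowε_eq : ∀ x x', {z | β x z} = {z | β x' z} → {z | ε x z} = {z | ε x' z} := by
    intro x x' h
    have h' : ∀ w, β x w ↔ β x' w := fun w => Set.ext_iff.mp h w
    ext z
    simp only [Set.mem_setOf_eq, hγ2', h, h']
  have colβ_eq : ∀ y y', {z | ε z y} = {z | ε z y'} → {w | β w y} = {w | β w y'} := by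
    intro y y' h
    ext w
    simp only [Set.mem_setOf_eq, hγ3', h]
  have colε_eq : ∀ y y', {z | β z y} = {z | β z y'} → {w | ε w y} = {w | ε w y'} := by
    intro y y' h
    ext w
    simp only [Set.mem_setOf_eq, hγ4', h]
  have domβε : ∀ x, (∃ z, β x z) → ∃ z, ε x z := by
    rintro x ⟨z, hz⟩; exact ((hγ1' x z).mp hz).2
  have domεβ : ∀ x, (∃ z, ε x z) → ∃ z, β x z := by
    rintro x ⟨z, hz⟩; exact ((hγ2' x z).mp hz).2
  have codomβε : ∀ y, (∃ w, β w y) → ∃ w, ε w y := by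
    rintro y ⟨w, hw⟩
    obtain ⟨heq, z, hz⟩ := (hγ3' w y).mp hw
    have : z ∈ {z | ε z y} := by rw [← heq]; exact hz
    exact ⟨z, this⟩
  -- facts about ε = betaOf C id
  have hεiff : ∀ x y, ε x y ↔ ∃ i, x ∈ C i ∧ y ∈ C i := fun x y => Iff.rfl
  have hεrow : ∀ {x : Fin n} {i : Fin r}, x ∈ C i → {z | ε x z} = C i :=
    fun {x i} hx => betaOf_row hdj (q := id) hx
  have hεcol : ∀ {y : Fin n} {i : Fin r}, y ∈ C i → {z | ε z y} = C i :=
    fun {y i} hy => betaOf_col hdj (q := id) Function.injective_id hy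
  -- difunctionality step for β
  have βstep : ∀ a b z w, β a b → β z b → β z w → β a w := by
    intro a b z w h1 h2 h3
    have h4 : rcomp β (rcomp (rinv β) β) a w := ⟨b, h1, z, h2, h3⟩
    rwa [hβd] at h4
  have colβ_const : ∀ x y y', β x y → β x y' → {w | β w y} = {w | β w y'} := by
    intro x y y' h1 h2
    ext w
    simp only [Set.mem_setOf_eq]
    exact ⟨fun hw => βstep w y x y' hw h1 h2, fun hw => βstep w y' x y hw h2 h1⟩
  -- each row of β is a block
  have rowblock : ∀ x i, x ∈ C i → ∃ j, {z | β x z} = C j := by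
    intro x i hx
    obtain ⟨y, hy⟩ : ∃ z, β x z := domεβ x ⟨x, (hεiff x x).mpr ⟨i, hx, hx⟩⟩
    obtain ⟨w, hw⟩ : ∃ w, ε w y := codomβε y ⟨x, hy⟩
    obtain ⟨j, hwj, hyj⟩ := (hεiff w y).mp hw
    refine ⟨j, ?_⟩
    ext z
    simp only [Set.mem_setOf_eq]
    constructor
    · intro hz
      have hc := colβ_const x y z hy hz
      have hc2 := colε_eq y z hc
      obtain ⟨w', hw'⟩ : ∃ w, ε w z := codomβε z ⟨x, hz⟩
      obtain ⟨k, hw'k, hzk⟩ := (hεiff w' z).mp hw'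
      have e1 : {w | ε w y} = C j := hεcol hyj
      have e2 : {w | ε w z} = C k := hεcol hzk
      have hjk : C j = C k := by rw [← e1, ← e2, hc2]
      rw [hjk]; exact hzk
    · intro hz
      have e1 : {w | ε w y} = C j := hεcol hyj
      have e2 : {w | ε w z} = C j := hεcol hz
      have hc := colβ_eq z y (by rw [e1, e2])
      have hx' : x ∈ {w | β w y} := hy
      rw [← hc] at hx'
      exact hx'
  have rowconst : ∀ x x' (i : Fin r), x ∈ C i → x' ∈ C i →
      {z | β x z} = {z | β x' z} := by
    intro x x' i hx hx'
    exact rowβ_eq x x' (by rw [hεrow hx, hεrow hx'])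
  -- build the permutation
  choose rep hrep using hne
  have hrowj : ∀ i, ∃ j, {z | β (rep i) z} = C j := fun i => rowblock (rep i) i (hrep i)
  choose q0 hq0 using hrowj
  have hinj : Function.Injective q0 := by
    intro i i' h
    have h1 : {z | β (rep i) z} = {z | β (rep i') z} := by rw [hq0 i, hq0 i', h]
    have h2 := rowε_eq (rep i) (rep i') h1
    rw [hεrow (hrep i), hεrow (hrep i')] at h2
    have h3 : rep i ∈ C i' := h2 ▸ hrep i
    exact hdj i i' (rep i) (hrep i) h3
  refine ⟨Equiv.ofBijective q0 (Finite.injective_iff_bijective.mp hinj), ?_⟩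
  apply rl_ext
  intro x y
  show β x y ↔ ∃ i, x ∈ C i ∧ y ∈ C (q0 i)
  constructor
  · intro hxy
    obtain ⟨z, hz⟩ : ∃ z, ε x z := domβε x ⟨y, hxy⟩
    obtain ⟨i, hxi, _⟩ := (hεiff x z).mp hz
    have hr := rowconst x (rep i) i hxi (hrep i)
    refine ⟨i, hxi, ?_⟩
    have : y ∈ {z | β x z} := hxy
    rw [hr, hq0 i] at this
    exact this
  · rintro ⟨i, hxi, hyi⟩
    have hr := rowconst x (rep i) i hxi (hrep i)
    have : y ∈ {z | β x z} := by rw [hr, hq0 i]; exact hyi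
    exact this

end Aux

/-- Every idempotent of rank `r` is of the form `betaOf C id` for suitable blocks. -/
lemma exists_blocks {n r : ℕ} (ε : Rl n) (hid : dia ε ε = ε) (hrk : rnk ε = r) :
    ∃ C : Fin r → Set (Fin n), (∀ i, (C i).Nonempty) ∧
      (∀ i j x, x ∈ C i → x ∈ C j → i = j) ∧ ε = betaOf C id := by
  have hmem : ∀ x y, ε x y ↔ ({z | ε x z} = {z | ε z y} ∧ ∃ z, ε x z) := by
    intro x y
    constructor
    · intro h
      rw [← hid] at h
      exact h
    · intro h
      rw [← hid]
      exact h
  have refl1 : ∀ x y, ε x y → ε x x := by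
    intro x y h
    obtain ⟨he, _⟩ := (hmem x y).mp h
    have hx : x ∈ {z | ε z y} := h
    rw [← he] at hx
    exact hx
  have refl2 : ∀ x y, ε x y → ε y y := by
    intro x y h
    obtain ⟨he, _⟩ := (hmem x y).mp h
    have hy : y ∈ {z | ε x z} := h
    rw [he] at hy
    exact hy
  have hsymm : ∀ x y, ε x y → ε y x := by
    intro x y h
    obtain ⟨he, _⟩ := (hmem x y).mp h
    have hxx := refl1 x y h
    have hyy := refl2 x y h
    obtain ⟨hex, _⟩ := (hmem x x).mp hxx
    obtain ⟨hey, _⟩ := (hmem y y).mp hyy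
    refine (hmem y x).mpr ⟨?_, ⟨y, hyy⟩⟩
    rw [hey, ← he, hex]
  have htrans : ∀ x y z, ε x y → ε y z → ε x z := by
    intro x y z h1 h2
    obtain ⟨he1, hne1⟩ := (hmem x y).mp h1
    obtain ⟨he2, _⟩ := (hmem y z).mp h2
    have hyy := refl2 x y h1
    obtain ⟨hey, _⟩ := (hmem y y).mp hyy
    exact (hmem x z).mpr ⟨by rw [he1, ← hey, he2], hne1⟩
  have kerdesc : ∀ x, (∃ z, ε x z) →
      {x' | {z | ε x' z} = {z | ε x z}} = {z | ε x z} := by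
    rintro x ⟨w, hw⟩
    have hxx : ε x x := refl1 x w hw
    ext x'
    simp only [Set.mem_setOf_eq]
    constructor
    · intro h
      have : x ∈ {z | ε x' z} := by rw [h]; exact hxx
      exact hsymm x' x this
    · intro h
      ext z
      simp only [Set.mem_setOf_eq]
      exact ⟨fun hz => htrans x x' z h hz, fun hz => htrans x' x z (hsymm x x' h) hz⟩
  have hker : ker ε = (fun x => {z | ε x z}) '' dom ε := by
    ext A
    simp only [ker, dom, Set.mem_image, Set.mem_setOf_eq]
    constructor
    · rintro ⟨x, hx, rfl⟩
      exact ⟨x, hx, (kerdesc x hx).symm⟩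
    · rintro ⟨x, hx, rfl⟩
      exact ⟨x, hx, (kerdesc x hx).symm⟩
  have hfin : (ker ε).Finite := Set.toFinite _
  obtain ⟨t, ht⟩ := hfin.exists_finset_coe
  have htc : t.card = r := by
    rw [← Set.ncard_coe_finset, ht]
    exact hrk
  let e := t.equivFinOfCardEq htc
  let C : Fin r → Set (Fin n) := fun i => ((e.symm i : Set (Fin n)))
  have hCk : ∀ i, C i ∈ ker ε := fun i => by rw [← ht]; exact (e.symm i).2
  have hCrow : ∀ i, ∃ x, (∃ z, ε x z) ∧ {z | ε x z} = C i := by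
    intro i
    have h := hCk i
    rw [hker] at h
    obtain ⟨x, hx, hxe⟩ := h
    exact ⟨x, hx, hxe⟩
  have hCinj : ∀ i j, C i = C j → i = j := by
    intro i j h
    have h2 : e.symm i = e.symm j := Subtype.ext h
    exact e.symm.injective h2
  have hne : ∀ i, (C i).Nonempty := by
    intro i
    obtain ⟨x, hx, hxe⟩ := hCrow i
    exact ⟨x, by rw [← hxe]; exact refl1 x hx.choose hx.choose_spec⟩
  have hdj : ∀ i j x, x ∈ C i → x ∈ C j → i = j := by
    intro i j x hxi hxj
    apply hCinj
    obtain ⟨a, _, hea⟩ := hCrow i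
    obtain ⟨b, _, heb⟩ := hCrow j
    have hax : ε a x := by
      have h : x ∈ {z | ε a z} := by rw [hea]; exact hxi
      exact h
    have hbx : ε b x := by
      have h : x ∈ {z | ε b z} := by rw [heb]; exact hxj
      exact h
    have hab : ε a b := htrans a x b hax (hsymm b x hbx)
    rw [← hea, ← heb]
    ext z
    simp only [Set.mem_setOf_eq]
    exact ⟨fun hz => htrans b a z (hsymm a b hab) hz, fun hz => htrans a b z hab hz⟩
  have hCsurj : ∀ A ∈ ker ε, ∃ i, C i = A := by
    intro A hA
    have hA' : A ∈ t := by rw [← ht] at hA; exact hA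
    refine ⟨e ⟨A, hA'⟩, ?_⟩
    show ((e.symm (e ⟨A, hA'⟩) : Set (Fin n))) = A
    rw [Equiv.symm_apply_apply]
  refine ⟨C, hne, hdj, ?_⟩
  apply rl_ext
  intro x y
  show ε x y ↔ ∃ i, x ∈ C i ∧ y ∈ C (id i)
  simp only [id]
  constructor
  · intro h
    have hx : ∃ z, ε x z := ⟨y, h⟩
    have hA : {z | ε x z} ∈ ker ε := by rw [hker]; exact ⟨x, hx, rfl⟩
    obtain ⟨i, hi⟩ := hCsurj _ hA
    refine ⟨i, ?_, ?_⟩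
    · rw [hi]; exact refl1 x y h
    · rw [hi]; exact h
  · rintro ⟨i, hxi, hyi⟩
    obtain ⟨a, _, hea⟩ := hCrow i
    have hax : ε a x := by
      have h : x ∈ {z | ε a z} := by rw [hea]; exact hxi
      exact h
    have hay : ε a y := by
      have h : y ∈ {z | ε a z} := by rw [hea]; exact hyi
      exact h
    exact htrans x a y (hsymm a x hax) hay
/-- For 1 ≤ r ≤ n, the H-class of any idempotent of J_r is a group isomorphic to the
symmetric group S_r. -/
theorem stmt10 (n r : ℕ) (hr1 : 1 ≤ r) (hrn : r ≤ n) (ε : Rl n)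
    (hε : IsDifunctional ε) (hid : dia ε ε = ε) (hrk : rnk ε = r) :
    ∃ hc : ∀ a ∈ Hclass ε, ∀ b ∈ Hclass ε, dia a b ∈ Hclass ε,
    ∃ f : {a : Rl n // a ∈ Hclass ε} → Equiv.Perm (Fin r),
      Function.Bijective f ∧
      ∀ a b : {a : Rl n // a ∈ Hclass ε},
        f ⟨dia a.1 b.1, hc a.1 a.2 b.1 b.2⟩ = f a * f b := by
  obtain ⟨C, hne, hdj, hεeq⟩ := exists_blocks ε hid hrk
  have key : ∀ β : Rl n, β ∈ Hclass ε ↔ ∃ q : Equiv.Perm (Fin r), β = betaOf C ⇑q := by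
    intro β
    rw [hεeq]
    constructor
    · exact fun h => Hclass_sub hne hdj h
    · rintro ⟨q, rfl⟩
      exact betaOf_mem_Hclass hne hdj q
  have Ginj : ∀ q1 q2 : Equiv.Perm (Fin r), betaOf C ⇑q1 = betaOf C ⇑q2 → q1 = q2 :=
    fun q1 q2 h => Equiv.coe_fn_injective (betaOf_inj hne hdj h)
  have hdia : ∀ q1 q2 : Equiv.Perm (Fin r),
      dia (betaOf C ⇑q1) (betaOf C ⇑q2) = betaOf C ⇑(q2 * q1) := by
    intro q1 q2
    rw [dia_betaOf hne hdj q2.injective]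
    rfl
  have hc : ∀ a ∈ Hclass ε, ∀ b ∈ Hclass ε, dia a b ∈ Hclass ε := by
    intro a ha b hb
    obtain ⟨qa, rfl⟩ := (key a).mp ha
    obtain ⟨qb, rfl⟩ := (key b).mp hb
    exact (key _).mpr ⟨qb * qa, hdia qa qb⟩
  refine ⟨hc, ?_⟩
  have hsel : ∀ a : {a : Rl n // a ∈ Hclass ε}, ∃ q : Equiv.Perm (Fin r),
      a.1 = betaOf C ⇑q := fun a => (key a.1).mp a.2
  choose g hg using hsel
  refine ⟨fun a => (g a)⁻¹, ⟨?_, ?_⟩, ?_⟩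
  · intro a b h
    have h2 : g a = g b := inv_injective h
    apply Subtype.ext
    rw [hg a, hg b, h2]
  · intro p
    have hmem : betaOf C ⇑p⁻¹ ∈ Hclass ε := (key _).mpr ⟨p⁻¹, rfl⟩
    refine ⟨⟨betaOf C ⇑p⁻¹, hmem⟩, ?_⟩
    have h1 : g ⟨betaOf C ⇑p⁻¹, hmem⟩ = p⁻¹ :=
      (Ginj _ _ (hg ⟨betaOf C ⇑p⁻¹, hmem⟩).symm)
    show (g ⟨betaOf C ⇑p⁻¹, hmem⟩)⁻¹ = p
    rw [h1, inv_inv]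
  · intro a b
    set c : {a : Rl n // a ∈ Hclass ε} := ⟨dia a.1 b.1, hc a.1 a.2 b.1 b.2⟩ with hcdef
    have h1 : betaOf C ⇑(g c) = betaOf C ⇑(g b * g a) := by
      rw [← hg c]
      show dia a.1 b.1 = betaOf C ⇑(g b * g a)
      rw [hg a, hg b, hdia]
    have h2 : g c = g b * g a := Ginj _ _ h1
    show (g c)⁻¹ = (g a)⁻¹ * (g b)⁻¹
    rw [h2, mul_inv_rev]

end DRel
end

section
/- Let S be a finite semigroup with a unique maximal J-class J such that J is not a subsemigroup of S. Then rank(S) = rank(J*) + rank(S : J), where J* is the principal factor of J and rank(S : J) is the relative rank of S with respect to J. -/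
namespace DRel

/-- Green's J-preorder on an abstract semigroup: a ∈ S¹ b S¹. -/
def sleJ {S : Type*} [Semigroup S] (a b : S) : Prop :=
  a = b ∨ (∃ x, a = x * b ∨ a = b * x) ∨ ∃ x y, a = x * b * y

-- Multiplication of the principal factor J* = J ∪ {0} of a J-class J.
open Classical in
noncomputable def pfMul {S : Type*} [Semigroup S] (J : Set S) :
    Option {a // a ∈ J} → Option {a // a ∈ J} → Option {a // a ∈ J}
  | some a, some b => if h : (a.1 * b.1) ∈ J then some ⟨a.1 * b.1, h⟩ else none
  | _, _ => none

/-- The rank of a (finite) magma: least size of a generating set. -/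
noncomputable def genRank (T : Type*) (mul : T → T → T) : ℕ :=
  sInf {k | ∃ A : Set T, A.Finite ∧ A.ncard = k ∧ Gen mul A = Set.univ}

/-- The relative rank of T with respect to A. -/
noncomputable def relRank (T : Type*) (mul : T → T → T) (A : Set T) : ℕ :=
  sInf {k | ∃ B : Set T, B.Finite ∧ B.ncard = k ∧ Gen mul (A ∪ B) = Set.univ}

section GenLemmas
variable {T : Type*} {mul : T → T → T}

lemma subset_gen {A : Set T} : A ⊆ Gen mul A := fun _ ha =>
  Set.mem_sInter.2 fun _ hC => hC.1 ha

lemma gen_mul {A : Set T} {a b : T} (ha : a ∈ Gen mul A) (hb : b ∈ Gen mul A) :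
    mul a b ∈ Gen mul A :=
  Set.mem_sInter.2 fun C hC =>
    hC.2 a (Set.mem_sInter.1 ha C hC) b (Set.mem_sInter.1 hb C hC)

lemma gen_subset_of {A C : Set T} (h1 : A ⊆ C)
    (h2 : ∀ a ∈ C, ∀ b ∈ C, mul a b ∈ C) : Gen mul A ⊆ C :=
  fun _ hx => Set.mem_sInter.1 hx C ⟨h1, h2⟩

lemma gen_mono {A B : Set T} (h : A ⊆ B) : Gen mul A ⊆ Gen mul B :=
  gen_subset_of (h.trans subset_gen) fun _ ha _ hb => gen_mul ha hb

lemma gen_univ : Gen mul (Set.univ : Set T) = Set.univ :=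
  Set.eq_univ_of_univ_subset subset_gen

end GenLemmas

section SleJ
variable {S : Type*} [Semigroup S]

lemma sleJ_mul_left' {b c : S} (x : S) (h : sleJ b c) : sleJ (x * b) c := by
  rcases h with rfl | ⟨u, rfl | rfl⟩ | ⟨u, v, rfl⟩
  · exact Or.inr (Or.inl ⟨x, Or.inl rfl⟩)
  · exact Or.inr (Or.inl ⟨x * u, Or.inl (by simp [mul_assoc])⟩)
  · exact Or.inr (Or.inr ⟨x, u, by simp [mul_assoc]⟩)
  · exact Or.inr (Or.inr ⟨x * u, v, by simp [mul_assoc]⟩)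

lemma sleJ_mul_right' {b c : S} (x : S) (h : sleJ b c) : sleJ (b * x) c := by
  rcases h with rfl | ⟨u, rfl | rfl⟩ | ⟨u, v, rfl⟩
  · exact Or.inr (Or.inl ⟨x, Or.inr rfl⟩)
  · exact Or.inr (Or.inr ⟨u, x, rfl⟩)
  · exact Or.inr (Or.inl ⟨u * x, Or.inr (by simp [mul_assoc])⟩)
  · exact Or.inr (Or.inr ⟨u, v * x, by simp [mul_assoc]⟩)

lemma sleJ_trans {a b c : S} (h1 : sleJ a b) (h2 : sleJ b c) : sleJ a c := by
  rcases h1 with rfl | ⟨x, rfl | rfl⟩ | ⟨x, y, rfl⟩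
  · exact h2
  · exact sleJ_mul_left' x h2
  · exact sleJ_mul_right' x h2
  · rw [mul_assoc]; exact sleJ_mul_left' x (sleJ_mul_right' y h2)

lemma sleJ_left (s t : S) : sleJ (s * t) t := Or.inr (Or.inl ⟨s, Or.inl rfl⟩)

lemma sleJ_right (s t : S) : sleJ (s * t) s := Or.inr (Or.inl ⟨t, Or.inr rfl⟩)

lemma mem_J_of {J : Set S} (hJclass : ∃ a : S, J = {b | sleJ a b ∧ sleJ b a})
    {j s : S} (hj : j ∈ J) (h1 : sleJ s j) (h2 : sleJ j s) : s ∈ J := by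
  obtain ⟨a, rfl⟩ := hJclass
  exact ⟨sleJ_trans hj.1 h2, sleJ_trans h1 hj.2⟩

lemma pfMul_some {J : Set S} (a b : {x // x ∈ J}) (h : a.1 * b.1 ∈ J) :
    pfMul J (some a) (some b) = some ⟨a.1 * b.1, h⟩ := dif_pos h

lemma pfMul_eq_some {J : Set S} {x y : Option {a // a ∈ J}} {j : {a // a ∈ J}}
    (h : pfMul J x y = some j) :
    ∃ u v, x = some u ∧ y = some v ∧ j.1 = u.1 * v.1 := by
  match x, y with
  | some u, some v =>
    refine ⟨u, v, rfl, rfl, ?_⟩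
    by_cases hJ : u.1 * v.1 ∈ J
    · rw [pfMul_some u v hJ] at h
      cases h
      rfl
    · rw [show pfMul J (some u) (some v) = none from dif_neg hJ] at h
      exact absurd h (by simp)
  | none, _ => exact absurd h (by simp [pfMul])
  | some _, none => exact absurd h (by simp [pfMul])

open Classical in
/-- The embedding of S into J* sending non-J elements to 0. -/
noncomputable def emb (J : Set S) : S → Option {a // a ∈ J} :=
  fun s => if h : s ∈ J then some ⟨s, h⟩ else none

lemma emb_injOn {J : Set S} {X : Set S} (hX : X ⊆ J) : Set.InjOn (emb J) X := by
  intro s hs t ht h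
  rw [emb, emb, dif_pos (hX hs), dif_pos (hX ht)] at h
  simpa using h

/-- Key lemma: if X generates S, then emb '' (X ∩ J) generates the principal factor. -/
lemma gen_pf_of_gen {S : Type*} [Semigroup S] {J : Set S}
    (hJclass : ∃ a : S, J = {b | sleJ a b ∧ sleJ b a})
    (hmax : ∀ a : S, ∀ j ∈ J, sleJ a j)
    (hnotsub : ∃ a ∈ J, ∃ b ∈ J, a * b ∉ J)
    {X : Set S} (hX : Gen (· * ·) X = Set.univ) :
    Gen (pfMul J) (emb J '' (X ∩ J)) = Set.univ := by
  set G := Gen (pfMul J) (emb J '' (X ∩ J)) with hG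
  have key : ∀ s : S, ∀ h : s ∈ J, (some ⟨s, h⟩ : Option {a // a ∈ J}) ∈ G := by
    have hsub : Gen (· * ·) X ⊆ {s : S | ∀ h : s ∈ J, (some ⟨s, h⟩ : Option {a // a ∈ J}) ∈ G} := by
      refine gen_subset_of ?_ ?_
      · intro x hx h
        have : emb J x ∈ emb J '' (X ∩ J) := ⟨x, ⟨hx, h⟩, rfl⟩
        rw [emb, dif_pos h] at this
        exact subset_gen this
      · intro s hs t ht h
        have hsJ : s ∈ J := mem_J_of hJclass h (hmax s _ h) (sleJ_right s t)
        have htJ : t ∈ J := mem_J_of hJclass h (hmax t _ h) (sleJ_left s t)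
        have := gen_mul (mul := pfMul J) (hs hsJ) (ht htJ)
        rwa [pfMul_some ⟨s, hsJ⟩ ⟨t, htJ⟩ h] at this
    intro s h
    exact hsub (by rw [hX]; trivial) h
  have hnone : (none : Option {a // a ∈ J}) ∈ G := by
    obtain ⟨a, ha, b, hb, hab⟩ := hnotsub
    have := gen_mul (mul := pfMul J) (key a ha) (key b hb)
    rwa [show pfMul J (some ⟨a, ha⟩) (some ⟨b, hb⟩) = none from dif_neg hab] at this
  apply Set.eq_univ_of_forall
  intro x
  match x with
  | none => exact hnone
  | some j => exact key j.1 j.2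

/-- Key lemma: if A' generates the principal factor and J ∪ B generates S,
then (pullback of A') ∪ B generates S. -/
lemma gen_union_of {S : Type*} [Semigroup S] {J : Set S}
    {A' : Set (Option {a // a ∈ J})} {B : Set S}
    (hA' : Gen (pfMul J) A' = Set.univ)
    (hB : Gen (· * ·) (J ∪ B) = Set.univ) :
    Gen (· * ·) ({s : S | ∃ h : s ∈ J, (some ⟨s, h⟩ : Option {a // a ∈ J}) ∈ A'} ∪ B)
      = Set.univ := by
  set A : Set S := {s : S | ∃ h : s ∈ J, (some ⟨s, h⟩ : Option {a // a ∈ J}) ∈ A'} with hA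
  set GAB := Gen (· * ·) (A ∪ B) with hGAB
  have hJsub : J ⊆ GAB := by
    have hsub : Gen (pfMul J) A' ⊆ {x : Option {a // a ∈ J} | ∀ j, x = some j → j.1 ∈ GAB} := by
      refine gen_subset_of ?_ ?_
      · rintro x hx j rfl
        exact subset_gen (Or.inl ⟨j.2, hx⟩)
      · intro x hx y hy j hj
        obtain ⟨u, v, rfl, rfl, huv⟩ := pfMul_eq_some hj
        rw [huv]
        exact gen_mul (hx u rfl) (hy v rfl)
    intro j hj
    exact hsub (by rw [hA']; trivial) ⟨j, hj⟩ rfl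
  have : Gen (· * ·) (J ∪ B) ⊆ GAB := by
    refine gen_subset_of ?_ ?_
    · rintro x (hx | hx)
      · exact hJsub hx
      · exact subset_gen (Or.inr hx)
    · exact fun a ha b hb => gen_mul ha hb
  rw [hB] at this
  exact Set.eq_univ_of_univ_subset this

end SleJ

/-- If a finite semigroup S has a unique maximal J-class J which is not a subsemigroup,
then rank(S) = rank(J*) + rank(S : J). -/
theorem stmt11 (S : Type*) [Semigroup S] [Fintype S] (J : Set S)
    (hJclass : ∃ a : S, J = {b | sleJ a b ∧ sleJ b a})
    (hmax : ∀ a : S, ∀ j ∈ J, sleJ a j)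
    (hnotsub : ∃ a ∈ J, ∃ b ∈ J, a * b ∉ J) :
    genRank S (· * ·) = genRank (Option {a // a ∈ J}) (pfMul J) + relRank S (· * ·) J := by
  classical
  -- attain the three infima
  have hS : genRank S (· * ·) ∈
      {k | ∃ A : Set S, A.Finite ∧ A.ncard = k ∧ Gen (· * ·) A = Set.univ} := by
    rw [genRank]
    exact Nat.sInf_mem ⟨_, Set.univ, Set.finite_univ, rfl, gen_univ⟩
  obtain ⟨X, hXfin, hXcard, hXgen⟩ := hS
  have hJstar : genRank (Option {a // a ∈ J}) (pfMul J) ∈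
      {k | ∃ A : Set (Option {a // a ∈ J}), A.Finite ∧ A.ncard = k ∧
        Gen (pfMul J) A = Set.univ} := by
    rw [genRank]
    refine Nat.sInf_mem ⟨_, emb J '' (X ∩ J), Set.toFinite _, rfl,
      gen_pf_of_gen hJclass hmax hnotsub hXgen⟩
  obtain ⟨A', hA'fin, hA'card, hA'gen⟩ := hJstar
  have hrel : relRank S (· * ·) J ∈
      {k | ∃ B : Set S, B.Finite ∧ B.ncard = k ∧ Gen (· * ·) (J ∪ B) = Set.univ} := by
    rw [relRank]
    refine Nat.sInf_mem ⟨_, Set.univ, Set.finite_univ, rfl, ?_⟩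
    rw [Set.union_univ]; exact gen_univ
  obtain ⟨B, hBfin, hBcard, hBgen⟩ := hrel
  apply le_antisymm
  · -- rank(S) ≤ rank(J*) + relrank
    set A : Set S := {s : S | ∃ h : s ∈ J, (some ⟨s, h⟩ : Option {a // a ∈ J}) ∈ A'} with hA
    have hgen : Gen (· * ·) (A ∪ B) = Set.univ := gen_union_of hA'gen hBgen
    have hAJ : A ⊆ J := fun s hs => hs.choose
    have hAcard : A.ncard ≤ A'.ncard := by
      have himg : emb J '' A ⊆ A' := by
        rintro _ ⟨s, hs, rfl⟩
        obtain ⟨h, hmem⟩ := hs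
        rwa [emb, dif_pos h]
      calc A.ncard = (emb J '' A).ncard := (Set.ncard_image_of_injOn (emb_injOn hAJ)).symm
        _ ≤ A'.ncard := Set.ncard_le_ncard himg hA'fin
    have hle : genRank S (· * ·) ≤ (A ∪ B).ncard := by
      rw [genRank]
      exact Nat.sInf_le ⟨A ∪ B, Set.toFinite _, rfl, hgen⟩
    calc genRank S (· * ·) ≤ (A ∪ B).ncard := hle
      _ ≤ A.ncard + B.ncard := Set.ncard_union_le A B
      _ ≤ A'.ncard + B.ncard := by omega
      _ = _ := by rw [hA'card, hBcard]
  · -- rank(J*) + relrank ≤ rank(S)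
    have h2 : genRank (Option {a // a ∈ J}) (pfMul J) ≤ (X ∩ J).ncard := by
      rw [genRank]
      refine Nat.sInf_le ⟨emb J '' (X ∩ J), Set.toFinite _,
        Set.ncard_image_of_injOn (emb_injOn Set.inter_subset_right), ?_⟩
      exact gen_pf_of_gen hJclass hmax hnotsub hXgen
    have h3 : relRank S (· * ·) J ≤ (X \ J).ncard := by
      rw [relRank]
      refine Nat.sInf_le ⟨X \ J, Set.toFinite _, rfl, ?_⟩
      apply Set.eq_univ_of_univ_subset
      rw [← hXgen]
      exact gen_mono (fun x hx => by
        by_cases h : x ∈ J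
        · exact Or.inl h
        · exact Or.inr ⟨hx, h⟩)
    have h4 : (X ∩ J).ncard + (X \ J).ncard = X.ncard := by
      rw [← Set.ncard_inter_add_ncard_diff_eq_ncard X J hXfin]
    omega

end DRel
end

section
/- Every α ∈ D_n with rank(α) ≤ r − 1 can be written as α = β ⋄ γ ⋄ δ, where β = λ_𝐀 for some partition 𝐀 of {1,...,n} into at most r blocks, δ = ρ_𝐁 for some partition 𝐁 of {1,...,n} into at most r blocks, γ belongs to the symmetric inverse monoid I_n ⊆ D_n, and rank(γ) = rank(α). -/
namespace DRel

open Classical in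
noncomputable def cls {n : ℕ} (ρ : Rl n) (x : Fin n) : Set (Fin n) :=
  if x ∈ dom ρ then {x' | {z | ρ x' z} = {z | ρ x z}} else (dom ρ)ᶜ

lemma cls_of_mem {n : ℕ} {ρ : Rl n} {x : Fin n} (h : x ∈ dom ρ) :
    cls ρ x = {x' | {z | ρ x' z} = {z | ρ x z}} := by simp [cls, h]

lemma cls_of_notMem {n : ℕ} {ρ : Rl n} {x : Fin n} (h : x ∉ dom ρ) :
    cls ρ x = (dom ρ)ᶜ := by simp [cls, h]

lemma cls_self {n : ℕ} (ρ : Rl n) (x : Fin n) : x ∈ cls ρ x := by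
  by_cases h : x ∈ dom ρ
  · rw [cls_of_mem h]; exact rfl
  · rw [cls_of_notMem h]; exact h

lemma mem_dom_of_mem_cls {n : ℕ} {ρ : Rl n} {x y : Fin n} (hx : x ∈ dom ρ)
    (h : y ∈ cls ρ x) : y ∈ dom ρ := by
  rw [cls_of_mem hx] at h
  obtain ⟨z, hz⟩ := hx
  exact ⟨z, (Set.ext_iff.mp h z).mpr hz⟩

lemma cls_eq_of_mem {n : ℕ} {ρ : Rl n} {x y : Fin n} (h : y ∈ cls ρ x) :
    cls ρ y = cls ρ x := by
  by_cases hx : x ∈ dom ρ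
  · have hy : y ∈ dom ρ := mem_dom_of_mem_cls hx h
    rw [cls_of_mem hx] at h
    rw [cls_of_mem hx, cls_of_mem hy]
    ext w; simp only [Set.mem_setOf_eq]
    rw [show {z | ρ y z} = {z | ρ x z} from h]
  · rw [cls_of_notMem hx] at h
    rw [cls_of_notMem hx, cls_of_notMem h]

lemma ker_eq_image_s13 {n : ℕ} (ρ : Rl n) : ker ρ = cls ρ '' dom ρ := by
  ext K
  constructor
  · rintro ⟨x, hx, rfl⟩; exact ⟨x, hx, (cls_of_mem hx).symm ▸ rfl⟩
  · rintro ⟨x, hx, rfl⟩; exact ⟨x, hx, (cls_of_mem hx)⟩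

lemma range_cls_subset {n : ℕ} (ρ : Rl n) :
    Set.range (cls ρ) ⊆ ker ρ ∪ {(dom ρ)ᶜ} := by
  rintro K ⟨x, rfl⟩
  by_cases hx : x ∈ dom ρ
  · exact Or.inl ⟨x, hx, cls_of_mem hx⟩
  · exact Or.inr (by simp [cls_of_notMem hx])

lemma ncard_image_congr {T B C : Type*} [Nonempty T] (s : Set T) (f : T → B) (g : T → C)
    (h : ∀ x ∈ s, ∀ y ∈ s, f x = f y ↔ g x = g y) :
    (f '' s).ncard = (g '' s).ncard := by
  classical
  set φ : B → C := fun b => g (Function.invFunOn f s b) with hφ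
  have himg : g '' s = φ '' (f '' s) := by
    ext c
    constructor
    · rintro ⟨x, hx, rfl⟩
      refine ⟨f x, ⟨x, hx, rfl⟩, ?_⟩
      have h1 : Function.invFunOn f s (f x) ∈ s := Function.invFunOn_mem ⟨x, hx, rfl⟩
      have h2 : f (Function.invFunOn f s (f x)) = f x := Function.invFunOn_eq ⟨x, hx, rfl⟩
      exact ((h _ h1 _ hx).mp h2).symm ▸ rfl
    · rintro ⟨b, ⟨x, hx, rfl⟩, rfl⟩
      exact ⟨_, Function.invFunOn_mem ⟨x, hx, rfl⟩, rfl⟩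
  have hinj : Set.InjOn φ (f '' s) := by
    rintro b ⟨x, hx, rfl⟩ b' ⟨x', hx', rfl⟩ hbb
    have h1 : Function.invFunOn f s (f x) ∈ s := Function.invFunOn_mem ⟨x, hx, rfl⟩
    have h2 : f (Function.invFunOn f s (f x)) = f x := Function.invFunOn_eq ⟨x, hx, rfl⟩
    have h1' : Function.invFunOn f s (f x') ∈ s := Function.invFunOn_mem ⟨x', hx', rfl⟩
    have h2' : f (Function.invFunOn f s (f x')) = f x' := Function.invFunOn_eq ⟨x', hx', rfl⟩
    have : g (Function.invFunOn f s (f x)) = g (Function.invFunOn f s (f x')) := hbb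
    have := (h _ h1 _ h1').mpr this
    rw [h2, h2'] at this; exact this
  rw [himg, Set.ncard_image_of_injOn hinj]

lemma exists_sorted_partition {n : ℕ} (c : Fin n → Set (Fin n))
    (hmem : ∀ x, x ∈ c x) (heq : ∀ x y, y ∈ c x → c y = c x) :
    ∃ (k : ℕ) (A : Fin k → Set (Fin n)) (e : Fin k → Fin n),
      k = (Set.range c).ncard ∧ (∀ i, A i = c (e i)) ∧ (∀ i, e i ∈ A i) ∧
      (∀ i, ∀ x ∈ A i, e i ≤ x) ∧ StrictMono e ∧ (∀ x, ∃ i, x ∈ A i) := by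
  classical
  set M : Finset (Fin n) := Finset.univ.filter (fun x => ∀ y ∈ c x, x ≤ y) with hM
  have hMmem : ∀ x, x ∈ M ↔ ∀ y ∈ c x, x ≤ y := by
    intro x; simp [hM]
  -- every block has a min in M
  have hminM : ∀ x : Fin n, ∃ m ∈ M, c m = c x := by
    intro x
    obtain ⟨m, hm, hmin⟩ := Set.exists_min_image (c x) id (c x).toFinite ⟨x, hmem x⟩
    have hcm : c m = c x := heq x m hm
    refine ⟨m, (hMmem m).mpr ?_, hcm⟩
    intro y hy; exact hmin y (by rwa [hcm] at hy)
  set k := M.card with hk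
  set eo := M.orderIsoOfFin rfl with heo
  set e : Fin k → Fin n := fun i => (eo i : Fin n) with he
  have heM : ∀ i, e i ∈ M := fun i => (eo i).2
  have hsm : StrictMono e := fun i j hij => by
    have := eo.strictMono hij
    exact this
  refine ⟨k, fun i => c (e i), e, ?_, fun i => rfl, fun i => hmem (e i), ?_, hsm, ?_⟩
  · -- k = (range c).ncard
    have himg : Set.range c = c '' (M : Set (Fin n)) := by
      ext K; constructor
      · rintro ⟨x, rfl⟩
        obtain ⟨m, hm, hcm⟩ := hminM x
        exact ⟨m, hm, hcm⟩
      · rintro ⟨x, _, rfl⟩; exact ⟨x, rfl⟩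
    have hinj : Set.InjOn c (M : Set (Fin n)) := by
      intro x hx y hy hxy
      have h1 : x ≤ y := (hMmem x).mp hx y (by rw [hxy]; exact hmem y)
      have h2 : y ≤ x := (hMmem y).mp hy x (by rw [← hxy]; exact hmem x)
      exact le_antisymm h1 h2
    rw [himg, Set.ncard_image_of_injOn hinj, Set.ncard_coe_finset]
  · intro i x hx
    exact (hMmem (e i)).mp (heM i) x hx
  · intro x
    obtain ⟨m, hm, hcm⟩ := hminM x
    obtain ⟨i, hi⟩ := eo.surjective ⟨m, hm⟩
    refine ⟨i, ?_⟩
    have hei : e i = m := by rw [he]; exact congrArg Subtype.val hi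
    show x ∈ c (e i)
    rw [hei, hcm]; exact hmem x

lemma dif_trans {n : ℕ} {α : Rl n} (hα : IsDifunctional α) :
    ∀ w z u v, α w z → α u z → α u v → α w v := by
  intro w z u v h1 h2 h3
  have : rcomp α (rcomp (rinv α) α) w v := ⟨z, h1, u, h2, h3⟩
  rwa [hα] at this

lemma cls_eq_iff {n : ℕ} {ρ : Rl n} {x x' : Fin n} (hx : x ∈ dom ρ) (hx' : x' ∈ dom ρ) :
    cls ρ x = cls ρ x' ↔ {z | ρ x z} = {z | ρ x' z} := by
  rw [cls_of_mem hx, cls_of_mem hx']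
  constructor
  · intro h
    have : x ∈ {x'' | {z | ρ x'' z} = {z | ρ x' z}} := by rw [← h]; exact rfl
    exact this
  · intro h
    ext w; simp only [Set.mem_setOf_eq]; rw [h]

lemma mem_dom_of_cls_eq {n : ℕ} {ρ : Rl n} {x x' : Fin n} (hx' : x' ∈ dom ρ)
    (h : cls ρ x = cls ρ x') : x ∈ dom ρ := by
  by_contra hx
  have h2 : x' ∈ cls ρ x' := cls_self ρ x'
  rw [← h, cls_of_notMem hx] at h2
  exact h2 hx'

lemma rel_class_iff {n : ℕ} {α : Rl n} (hα : IsDifunctional α) {x y x' y' : Fin n}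
    (h : α x y) (h' : α x' y') :
    ({z | α x z} = {z | α x' z}) ↔ ({z | rinv α y z} = {z | rinv α y' z}) := by
  have hdt := dif_trans hα
  constructor
  · intro hxx
    have hy' : α x y' := by
      have : y' ∈ {z | α x' z} := h'
      rw [← hxx] at this; exact this
    ext w
    show α w y ↔ α w y'
    exact ⟨fun hw => hdt w y x y' hw h hy', fun hw => hdt w y' x y hw hy' h⟩
  · intro hyy
    have hx'y : α x' y := by
      have : x' ∈ {z | rinv α y' z} := h'
      rw [← hyy] at this; exact this
    ext z
    show α x z ↔ α x' z
    exact ⟨fun hz => hdt x' y x z hx'y h hz, fun hz => hdt x y x' z h hx'y hz⟩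


/-- Every α ∈ D_n with rank(α) ≤ r−1 factors as λ_𝐀 ⋄ γ ⋄ ρ_𝐁 with 𝐀, 𝐁 partitions of
{1,…,n} into at most r blocks, γ ∈ I_n and rank(γ) = rank(α). -/
theorem stmt13 (n r : ℕ) (hn : 0 < n) (hr1 : 1 ≤ r) (hrn : r ≤ n)
    (α : Rl n) (hα : IsDifunctional α) (hrk : rnk α ≤ r - 1) :
    ∃ (k l : ℕ) (A : Fin k → Set (Fin n)) (B : Fin l → Set (Fin n)) (β γ δ : Rl n),
      k ≤ r ∧ l ≤ r ∧ IsLambda A β ∧ IsRho B δ ∧ InI γ ∧ rnk γ = rnk α ∧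
      α = dia β (dia γ δ) := by
  classical
  have hne : Nonempty (Fin n) := ⟨⟨0, hn⟩⟩
  obtain ⟨k, A, e, hk, hAc, heA, hminA, hsmA, hcovA⟩ :=
    exists_sorted_partition (cls α) (cls_self α) (fun x y h => cls_eq_of_mem h)
  obtain ⟨l, B, f, hl, hBc, hfB, hminB, hsmB, hcovB⟩ :=
    exists_sorted_partition (cls (rinv α)) (cls_self (rinv α)) (fun x y h => cls_eq_of_mem h)
  have hA_eq : ∀ i x, x ∈ A i → A i = cls α x := by
    intro i x hx
    rw [hAc i] at hx ⊢
    exact (cls_eq_of_mem hx).symm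
  have hB_eq : ∀ j y, y ∈ B j → B j = cls (rinv α) y := by
    intro j y hy
    rw [hBc j] at hy ⊢
    exact (cls_eq_of_mem hy).symm
  have hA_inj : ∀ i j, A i = A j → i = j := by
    intro i j hij
    have h1 := hminA i (e j) (by rw [hij]; exact heA j)
    have h2 := hminA j (e i) (by rw [← hij]; exact heA i)
    exact hsmA.injective (le_antisymm h1 h2)
  have hB_inj : ∀ i j, B i = B j → i = j := by
    intro i j hij
    have h1 := hminB i (f j) (by rw [hij]; exact hfB j)
    have h2 := hminB j (f i) (by rw [← hij]; exact hfB i)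
    exact hsmB.injective (le_antisymm h1 h2)
  choose iA hiA using hcovA
  choose jB hjB using hcovB
  have hAx : ∀ x, A (iA x) = cls α x := fun x => hA_eq _ _ (hiA x)
  have hBy : ∀ y, B (jB y) = cls (rinv α) y := fun y => hB_eq _ _ (hjB y)
  have hiA_eq : ∀ x x', cls α x = cls α x' → iA x = iA x' :=
    fun x x' h => hA_inj _ _ (by rw [hAx, hAx, h])
  have hjB_eq : ∀ y y', cls (rinv α) y = cls (rinv α) y' → jB y = jB y' :=
    fun y y' h => hB_inj _ _ (by rw [hBy, hBy, h])
  -- cardinality bounds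
  have hrk' : (ker α).ncard ≤ r - 1 := hrk
  have hkr : k ≤ r := by
    have h1 : (Set.range (cls α)).ncard ≤ (ker α ∪ {(dom α)ᶜ}).ncard :=
      Set.ncard_le_ncard (range_cls_subset α) (Set.toFinite _)
    have h2 := Set.ncard_union_le (ker α) ({(dom α)ᶜ} : Set (Set (Fin n)))
    rw [Set.ncard_singleton] at h2
    omega
  have hcc : (ker (rinv α)).ncard = (ker α).ncard := by
    have h1 : ker α = (fun p : Fin n × Fin n => cls α p.1) '' {p : Fin n × Fin n | α p.1 p.2} := by
      rw [ker_eq_image_s13]; ext K; constructor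
      · rintro ⟨x, ⟨y, hy⟩, rfl⟩; exact ⟨(x, y), hy, rfl⟩
      · rintro ⟨p, hp, rfl⟩; exact ⟨p.1, ⟨p.2, hp⟩, rfl⟩
    have h2 : ker (rinv α) =
        (fun p : Fin n × Fin n => cls (rinv α) p.2) '' {p : Fin n × Fin n | α p.1 p.2} := by
      rw [ker_eq_image_s13]; ext K; constructor
      · rintro ⟨y, ⟨x, hx⟩, rfl⟩; exact ⟨(x, y), hx, rfl⟩
      · rintro ⟨p, hp, rfl⟩; exact ⟨p.2, ⟨p.1, hp⟩, rfl⟩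
    rw [h1, h2]
    exact (ncard_image_congr _ _ _ (fun p hp q hq => by
      rw [cls_eq_iff (⟨p.2, hp⟩ : p.1 ∈ dom α) ⟨q.2, hq⟩,
        cls_eq_iff (⟨p.1, hp⟩ : p.2 ∈ dom (rinv α)) ⟨q.1, hq⟩]
      exact rel_class_iff hα hp hq)).symm
  have hlr : l ≤ r := by
    have h1 : (Set.range (cls (rinv α))).ncard ≤ (ker (rinv α) ∪ {(dom (rinv α))ᶜ}).ncard :=
      Set.ncard_le_ncard (range_cls_subset (rinv α)) (Set.toFinite _)
    have h2 := Set.ncard_union_le (ker (rinv α)) ({(dom (rinv α))ᶜ} : Set (Set (Fin n)))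
    rw [Set.ncard_singleton] at h2
    omega
  have hkn : k ≤ n := hkr.trans hrn
  have hln : l ≤ n := hlr.trans hrn
  set embA : Fin k → Fin n := fun i => ⟨i.1, lt_of_lt_of_le i.2 hkn⟩ with hembA
  set embB : Fin l → Fin n := fun j => ⟨j.1, lt_of_lt_of_le j.2 hln⟩ with hembB
  have hembA_inj : Function.Injective embA := by
    intro i j h
    rw [hembA] at h
    simp only [Fin.mk.injEq] at h
    exact Fin.ext h
  have hembB_inj : Function.Injective embB := by
    intro i j h
    rw [hembB] at h
    simp only [Fin.mk.injEq] at h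
    exact Fin.ext h
  set β : Rl n := fun x y => ∃ i : Fin k, x ∈ A i ∧ (y : ℕ) = (i : ℕ) with hβ
  set δ : Rl n := fun x y => ∃ j : Fin l, (x : ℕ) = (j : ℕ) ∧ y ∈ B j with hδ
  set γ : Rl n := fun a b => ∃ x y, α x y ∧ a = embA (iA x) ∧ b = embB (jB y) with hγ
  have hAiff : ∀ x x', embA (iA x) = embA (iA x') ↔ cls α x = cls α x' := by
    intro x x'
    constructor
    · intro h; rw [← hAx x, ← hAx x', hembA_inj h]
    · intro h; exact congrArg embA (hiA_eq x x' h)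
  have hBiff : ∀ y y', embB (jB y) = embB (jB y') ↔ cls (rinv α) y = cls (rinv α) y' := by
    intro y y'
    constructor
    · intro h; rw [← hBy y, ← hBy y', hembB_inj h]
    · intro h; exact congrArg embB (hjB_eq y y' h)
  -- IsLambda
  have hLam : IsLambda A β := by
    refine ⟨fun i => ⟨e i, heA i⟩, ?_, ?_, ?_, fun x y => Iff.rfl⟩
    · intro i j hij
      rw [Set.disjoint_left]
      intro z hzi hzj
      exact hij (hA_inj i j (by rw [hA_eq i z hzi, hA_eq j z hzj]))
    · ext x
      simp only [Set.mem_iUnion, Set.mem_univ, iff_true]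
      exact ⟨iA x, hiA x⟩
    · intro i j hij
      exact ⟨e i, heA i, fun x hx => lt_of_lt_of_le (hsmA hij) (hminA j x hx)⟩
  have hRho : IsRho B δ := by
    refine ⟨fun j => ⟨f j, hfB j⟩, ?_, ?_, ?_, fun x y => Iff.rfl⟩
    · intro i j hij
      rw [Set.disjoint_left]
      intro z hzi hzj
      exact hij (hB_inj i j (by rw [hB_eq i z hzi, hB_eq j z hzj]))
    · ext y
      simp only [Set.mem_iUnion, Set.mem_univ, iff_true]
      exact ⟨jB y, hjB y⟩
    · intro i j hij
      exact ⟨f i, hfB i, fun x hx => lt_of_lt_of_le (hsmB hij) (hminB j x hx)⟩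
  -- γ functional and injective
  have hfun : ∀ a b b', γ a b → γ a b' → b = b' := by
    rintro a b b' ⟨x, y, hxy, rfl, rfl⟩ ⟨x', y', hxy', ha, rfl⟩
    have hcxx : cls α x = cls α x' := (hAiff x x').mp ha
    have hset : {z | α x z} = {z | α x' z} :=
      (cls_eq_iff ⟨y, hxy⟩ ⟨y', hxy'⟩).mp hcxx
    have hxy2 : α x y' := by
      have h0 : y' ∈ {z | α x' z} := hxy'
      rw [← hset] at h0; exact h0
    have h1 : {z | rinv α y z} = {z | rinv α y' z} :=
      (rel_class_iff hα hxy hxy2).mp rfl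
    exact congrArg embB (hjB_eq y y'
      ((cls_eq_iff (⟨x, hxy⟩ : y ∈ dom (rinv α)) ⟨x, hxy2⟩).mpr h1))
  have hinj : ∀ a a' b, γ a b → γ a' b → a = a' := by
    rintro a a' b ⟨x, y, hxy, rfl, rfl⟩ ⟨x', y', hxy', rfl, hb⟩
    have hcyy : cls (rinv α) y = cls (rinv α) y' := (hBiff y y').mp hb
    have hset : {z | rinv α y z} = {z | rinv α y' z} :=
      (cls_eq_iff (⟨x, hxy⟩ : y ∈ dom (rinv α)) ⟨x', hxy'⟩).mp hcyy
    have hx'y : α x' y := by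
      have h0 : x' ∈ {z | rinv α y' z} := hxy'
      rw [← hset] at h0; exact h0
    have h1 : {z | α x z} = {z | α x' z} := (rel_class_iff hα hxy hx'y).mpr rfl
    exact congrArg embA (hiA_eq x x' ((cls_eq_iff ⟨y, hxy⟩ ⟨y, hx'y⟩).mpr h1))
  -- key equivalence
  have hkey : ∀ x y, γ (embA (iA x)) (embB (jB y)) ↔ α x y := by
    intro x y
    constructor
    · rintro ⟨x', y', hxy', hax, hby⟩
      have hcxx : cls α x = cls α x' := (hAiff x x').mp hax
      have hx'd : x' ∈ dom α := ⟨y', hxy'⟩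
      have hxd : x ∈ dom α := mem_dom_of_cls_eq hx'd hcxx
      have hset : {z | α x z} = {z | α x' z} := (cls_eq_iff hxd hx'd).mp hcxx
      have hxy2 : α x y' := by
        have h0 : y' ∈ {z | α x' z} := hxy'
        rw [← hset] at h0; exact h0
      have hcyy : cls (rinv α) y = cls (rinv α) y' := (hBiff y y').mp hby
      have hy'd : y' ∈ dom (rinv α) := ⟨x', hxy'⟩
      have hyd : y ∈ dom (rinv α) := mem_dom_of_cls_eq hy'd hcyy
      have hset2 : {z | rinv α y z} = {z | rinv α y' z} := (cls_eq_iff hyd hy'd).mp hcyy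
      have h0 : x ∈ {z | rinv α y' z} := hxy2
      rw [← hset2] at h0
      exact h0
    · intro h; exact ⟨x, y, h, rfl, rfl⟩
  -- singleton image sets
  have hbeta : ∀ x z, β x z ↔ z = embA (iA x) := by
    intro x z
    constructor
    · rintro ⟨i, hxi, hz⟩
      have hii : i = iA x := hA_inj i (iA x) (by rw [hA_eq i x hxi, hAx x])
      subst hii
      exact Fin.ext hz
    · rintro rfl; exact ⟨iA x, hiA x, rfl⟩
  have hdelta : ∀ z y, δ z y ↔ z = embB (jB y) := by
    intro z y
    constructor
    · rintro ⟨j, hz, hyj⟩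
      have hjj : j = jB y := hB_inj j (jB y) (by rw [hB_eq j y hyj, hBy y])
      subst hjj
      exact Fin.ext hz
    · rintro rfl; exact ⟨jB y, rfl, hjB y⟩
  have hbset : ∀ x, {z | β x z} = {embA (iA x)} := by
    intro x; ext z
    rw [Set.mem_setOf_eq, Set.mem_singleton_iff]
    exact hbeta x z
  have hdset : ∀ y, {z | δ z y} = {embB (jB y)} := by
    intro y; ext z
    rw [Set.mem_setOf_eq, Set.mem_singleton_iff]
    exact hdelta z y
  -- composite computation
  have hstep1 : ∀ z y, dia γ δ z y ↔ γ z (embB (jB y)) := by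
    intro z y
    constructor
    · rintro ⟨hset, w, hw⟩
      have h0 : embB (jB y) ∈ {w | γ z w} := by
        rw [hset, hdset y]; exact rfl
      exact h0
    · intro h
      refine ⟨?_, _, h⟩
      rw [hdset y]
      ext w
      rw [Set.mem_setOf_eq, Set.mem_singleton_iff]
      constructor
      · intro hw; exact hfun z w _ hw h
      · rintro rfl; exact h
  have hstep2 : ∀ x y, dia β (dia γ δ) x y ↔ γ (embA (iA x)) (embB (jB y)) := by
    intro x y
    constructor
    · rintro ⟨hset, -⟩
      have h0 : embA (iA x) ∈ {z | dia γ δ z y} := by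
        rw [← hset, hbset x]; exact rfl
      exact (hstep1 _ y).mp h0
    · intro h
      refine ⟨?_, embA (iA x), (hbeta x _).mpr rfl⟩
      rw [hbset x]
      ext z
      rw [Set.mem_singleton_iff, Set.mem_setOf_eq]
      constructor
      · rintro rfl; exact (hstep1 _ y).mpr h
      · intro hz; exact (hinj z _ _ ((hstep1 z y).mp hz) h).symm ▸ rfl
  -- rank of γ
  have hγdom : dom γ = (fun x => embA (iA x)) '' dom α := by
    ext a
    constructor
    · rintro ⟨b, x, y, hxy, rfl, rfl⟩; exact ⟨x, ⟨y, hxy⟩, rfl⟩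
    · rintro ⟨x, ⟨y, hxy⟩, rfl⟩; exact ⟨embB (jB y), x, y, hxy, rfl, rfl⟩
  have hγcls : ∀ a, a ∈ dom γ → {a' | {z | γ a' z} = {z | γ a z}} = {a} := by
    intro a ha
    obtain ⟨b, hb⟩ := ha
    ext a'
    rw [Set.mem_setOf_eq, Set.mem_singleton_iff]
    constructor
    · intro h
      have h0 : γ a' b := by
        have h1 : b ∈ {z | γ a z} := hb
        rw [← h] at h1; exact h1
      exact hinj a' a b h0 hb
    · rintro rfl; rfl
  have hkerγ : ker γ = (fun a => ({a} : Set (Fin n))) '' dom γ := by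
    ext K
    constructor
    · rintro ⟨a, ha, rfl⟩; exact ⟨a, ha, (hγcls a ha).symm⟩
    · rintro ⟨a, ha, rfl⟩; exact ⟨a, ha, (hγcls a ha).symm⟩
  have hrnkγ : rnk γ = rnk α := by
    show (ker γ).ncard = (ker α).ncard
    have hs : Set.InjOn (fun a => ({a} : Set (Fin n))) (dom γ) := by
      intro a _ a' _ h
      exact Set.singleton_eq_singleton_iff.mp h
    rw [hkerγ, Set.ncard_image_of_injOn hs, hγdom, ker_eq_image_s13]
    exact ncard_image_congr (dom α) _ _ (fun x _ x' _ => hAiff x x')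
  refine ⟨k, l, A, B, β, γ, δ, hkr, hlr, hLam, hRho, ⟨hfun, hinj⟩, hrnkγ, ?_⟩
  funext x y
  exact propext (((hstep2 x y).trans (hkey x y)).symm)


end DRel
end

section
/- If α, β, γ ∈ D_n satisfy α = β ⋄ γ and dom(α) = {1,...,n}, then ker(α) = ker(β). -/
namespace DRel

/-- If α = β ⋄ γ in D_n and dom(α) = {1,…,n}, then ker(α) = ker(β). -/
theorem stmt15 (n : ℕ) (α β γ : Rl n)
    (hα : IsDifunctional α) (hβ : IsDifunctional β) (hγ : IsDifunctional γ)
    (h : α = dia β γ) (hd : dom α = Set.univ) :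
    ker α = ker β := by
  have hdom : ∀ x : Fin n, ∃ y, α x y := by
    intro x
    have hx : x ∈ dom α := by rw [hd]; trivial
    exact hx
  have key : ∀ x x' : Fin n,
      ({z | α x' z} = {z | α x z}) ↔ ({z | β x' z} = {z | β x z}) := by
    intro x x'
    constructor
    · intro hrow
      obtain ⟨y, hy⟩ := hdom x
      have hxy : ({z | β x z} = {z | γ z y}) ∧ ∃ z, β x z := by
        rw [h] at hy; exact hy
      have hx'y : α x' y := by
        have : y ∈ {z | α x' z} := by rw [hrow]; exact hy
        exact this
      have hx'y' : ({z | β x' z} = {z | γ z y}) ∧ ∃ z, β x' z := by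
        rw [h] at hx'y; exact hx'y
      rw [hx'y'.1, hxy.1]
    · intro hrow
      have hne : (∃ z, β x' z) ↔ ∃ z, β x z := by
        constructor <;> rintro ⟨z, hz⟩ <;>
          exact ⟨z, by
            first
            | exact (Set.ext_iff.mp hrow z).mp hz
            | exact (Set.ext_iff.mp hrow z).mpr hz⟩
      ext y
      simp only [Set.mem_setOf_eq, h, dia, hrow, hne]
  ext A
  simp only [ker, dom, Set.mem_setOf_eq]
  constructor
  · rintro ⟨x, ⟨y, hy⟩, rfl⟩
    refine ⟨x, ?_, ?_⟩
    · rw [h] at hy; exact hy.2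
    · ext x'; simp only [Set.mem_setOf_eq, key]
  · rintro ⟨x, _, rfl⟩
    refine ⟨x, hdom x, ?_⟩
    ext x'; simp only [Set.mem_setOf_eq, key]

end DRel
end
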